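/- arXiv:2210.08568 — 11 statements merged into one kernel-verified Lean document; each statement's English description precedes it below -/
import Mathlib

section
/- Let γ > 1, let (ρ, u_x, u_y, u_z, p) be a primitive state with ρ > 0, p > 0 and u_x² + u_y² + u_z² < 1, let r ∈ ℝ and E, B ∈ ℝ³. Then the entropy variables are orthogonal to the Lorentz-force source: V(W) · s(W, E, B) = 0, where · is the dot product on ℝ⁵. (In particular the source terms do not affect the entropy evolution.) -/
noncomputable section

/-- Dot product on ℝ³. -/
def dot3 (a b : Fin 3 → ℝ) : ℝ := a 0 * b 0 + a 1 * b 1 + a 2 * b 2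

/-- Cross product on ℝ³. -/
def cross3 (a b : Fin 3 → ℝ) : Fin 3 → ℝ :=
  ![a 1 * b 2 - a 2 * b 1, a 2 * b 0 - a 0 * b 2, a 0 * b 1 - a 1 * b 0]

/-- Dot product on ℝ⁵. -/
def dot5 (a b : Fin 5 → ℝ) : ℝ :=
  a 0 * b 0 + a 1 * b 1 + a 2 * b 2 + a 3 * b 3 + a 4 * b 4

/-- The entropy variables are orthogonal to the Lorentz-force source:
`V(W) · s(W, E, B) = 0`. -/
theorem entropy_vars_orthogonal_source
    (γ ρ ux uy uz p r : ℝ) (E B : Fin 3 → ℝ)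
    (hγ : 1 < γ) (hρ : 0 < ρ) (hp : 0 < p)
    (hu : ux ^ 2 + uy ^ 2 + uz ^ 2 < 1) :
    let u : Fin 3 → ℝ := ![ux, uy, uz]
    let Γ : ℝ := 1 / Real.sqrt (1 - (ux ^ 2 + uy ^ 2 + uz ^ 2))
    let s : ℝ := Real.log (p * ρ ^ (-γ))
    let β : ℝ := ρ / p
    let V : Fin 5 → ℝ :=
      ![(γ - s) / (γ - 1) + β, ux * Γ * β, uy * Γ * β, uz * Γ * β, -(Γ * β)]
    let srcv : Fin 5 → ℝ :=
      ![0,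
        r * ρ * Γ * (E 0 + cross3 u B 0),
        r * ρ * Γ * (E 1 + cross3 u B 1),
        r * ρ * Γ * (E 2 + cross3 u B 2),
        r * ρ * Γ * dot3 u E]
    dot5 V srcv = 0 := by
  intro u Γ s β V srcv
  simp only [V, srcv, u, dot5, dot3, cross3, Matrix.cons_val_zero, Matrix.cons_val_one,
    Matrix.head_cons, Matrix.cons_val_two, Matrix.tail_cons, Matrix.cons_val_three,
    Matrix.cons_val_four]
  ring
end
end

section
/- Let γ > 1 and let (ρ, u_x, u_y, u_z, p) be a primitive state with ρ > 0, p > 0 and u_x² + u_y² + u_z² < 1. Then the x-directional entropy potential satisfies V(W) · f^x(W) − ℱ^x(W) = ρ Γ u_x, where · is the dot product on ℝ⁵. -/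
noncomputable section

set_option maxHeartbeats 4000000 in
/-- The x-directional entropy potential satisfies
`V(W) · f^x(W) − ℱ^x(W) = ρ Γ u_x`. -/
theorem entropy_potential_x
    (γ ρ ux uy uz p : ℝ)
    (hγ : 1 < γ) (hρ : 0 < ρ) (hp : 0 < p)
    (hu : ux ^ 2 + uy ^ 2 + uz ^ 2 < 1) :
    let Γ : ℝ := 1 / Real.sqrt (1 - (ux ^ 2 + uy ^ 2 + uz ^ 2))
    let h : ℝ := 1 + γ / (γ - 1) * (p / ρ)
    let s : ℝ := Real.log (p * ρ ^ (-γ))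
    let β : ℝ := ρ / p
    let V : Fin 5 → ℝ :=
      ![(γ - s) / (γ - 1) + β, ux * Γ * β, uy * Γ * β, uz * Γ * β, -(Γ * β)]
    let D : ℝ := ρ * Γ
    let Mx : ℝ := ρ * h * Γ ^ 2 * ux
    let My : ℝ := ρ * h * Γ ^ 2 * uy
    let Mz : ℝ := ρ * h * Γ ^ 2 * uz
    let fx : Fin 5 → ℝ := ![D * ux, Mx * ux + p, My * ux, Mz * ux, Mx]
    let Fx : ℝ := -(ρ * Γ * s * ux) / (γ - 1)
    dot5 V fx - Fx = ρ * Γ * ux := by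
  intro Γ h s β V D Mx My Mz fx Fx
  have h1 : 0 < 1 - (ux ^ 2 + uy ^ 2 + uz ^ 2) := by linarith
  have hq : Real.sqrt (1 - (ux ^ 2 + uy ^ 2 + uz ^ 2)) ^ 2
      = 1 - (ux ^ 2 + uy ^ 2 + uz ^ 2) := Real.sq_sqrt h1.le
  have hne : Real.sqrt (1 - (ux ^ 2 + uy ^ 2 + uz ^ 2)) ≠ 0 :=
    ne_of_gt (Real.sqrt_pos.mpr h1)
  have hγ1 : γ - 1 ≠ 0 := by linarith
  simp only [dot5, V, fx, Fx, D, Mx, My, Mz, Γ, h, β, Matrix.cons_val_zero,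
    Matrix.cons_val_one, Matrix.head_cons, Matrix.cons_val_two, Matrix.tail_cons,
    Matrix.cons_val_three, Matrix.cons_val_four]
  set q := Real.sqrt (1 - (ux ^ 2 + uy ^ 2 + uz ^ 2)) with hqdef
  field_simp
  ring_nf
  have h12 : q ^ 12 = (1 - (ux ^ 2 + uy ^ 2 + uz ^ 2)) ^ 6 := by rw [← hq]; ring
  have h14 : q ^ 14 = (1 - (ux ^ 2 + uy ^ 2 + uz ^ 2)) ^ 7 := by rw [← hq]; ring
  simp only [h12, h14, hq]
  ring
end
end

section
/- Let γ > 1 and let Ω_W ⊂ ℝ⁵ be the open set of primitive states W = (ρ, u_x, u_y, u_z, p) with ρ > 0, p > 0 and u_x² + u_y² + u_z² < 1. Let Φ : Ω_W → ℝ⁵, Φ(W) = U(W), be the map to conservative variables and let 𝒰 : Ω_W → ℝ be the entropy function. Then for every W ∈ Ω_W and every direction w ∈ ℝ⁵, the Fréchet derivatives satisfy D𝒰(W)(w) = V(W) · DΦ(W)(w), where · is the dot product on ℝ⁵; that is, V is the gradient of 𝒰 with respect to the conservative variables. -/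
noncomputable section

/-- Lorentz factor of a primitive state `W = (ρ, u_x, u_y, u_z, p)`. -/
def Gm (W : Fin 5 → ℝ) : ℝ := 1 / Real.sqrt (1 - (W 1 ^ 2 + W 2 ^ 2 + W 3 ^ 2))

/-- Specific enthalpy. -/
def enth (γ : ℝ) (W : Fin 5 → ℝ) : ℝ := 1 + γ / (γ - 1) * (W 4 / W 0)

/-- Map from primitive to conservative variables `U(W) = (D, M_x, M_y, M_z, ℰ)`. -/
def Umap (γ : ℝ) (W : Fin 5 → ℝ) : Fin 5 → ℝ :=
  ![W 0 * Gm W,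
    W 0 * enth γ W * Gm W ^ 2 * W 1,
    W 0 * enth γ W * Gm W ^ 2 * W 2,
    W 0 * enth γ W * Gm W ^ 2 * W 3,
    W 0 * enth γ W * Gm W ^ 2 - W 4]

/-- The entropy function `𝒰 = −ρΓ s /(γ−1)` with `s = ln(p ρ^{-γ})`. -/
def entU (γ : ℝ) (W : Fin 5 → ℝ) : ℝ :=
  -(W 0 * Gm W * Real.log (W 4 * W 0 ^ (-γ))) / (γ - 1)

/-- The entropy variables `V(W)`. -/
def entV (γ : ℝ) (W : Fin 5 → ℝ) : Fin 5 → ℝ :=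
  ![(γ - Real.log (W 4 * W 0 ^ (-γ))) / (γ - 1) + W 0 / W 4,
    W 1 * Gm W * (W 0 / W 4),
    W 2 * Gm W * (W 0 / W 4),
    W 3 * Gm W * (W 0 / W 4),
    -(Gm W * (W 0 / W 4))]

set_option maxHeartbeats 2000000 in
lemma key_id (γ ρ p u1 u2 u3 w0 w1 w2 w3 w4 g s : ℝ)
    (hγ : γ - 1 ≠ 0) (hρ : ρ ≠ 0) (hp : p ≠ 0)
    (hg : g ^ 2 * (1 - (u1 ^ 2 + u2 ^ 2 + u3 ^ 2)) = 1) :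
    -((w0 * g + ρ * ((u1*w1+u2*w2+u3*w3) * g^3)) * s
        + ρ * g * (w4/p - γ * w0/ρ)) / (γ - 1)
      = ((γ - s)/(γ-1) + ρ/p) * (w0 * g + ρ * ((u1*w1+u2*w2+u3*w3) * g^3))
        + (u1 * g * (ρ/p)) *
            ((w0*(1 + γ/(γ-1)*(p/ρ)) + ρ*(γ/(γ-1)*((w4*ρ - p*w0)/ρ^2)))*g^2*u1
              + 2*ρ*(1 + γ/(γ-1)*(p/ρ))*(u1*w1+u2*w2+u3*w3)*g^4*u1
              + ρ*(1 + γ/(γ-1)*(p/ρ))*g^2*w1)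
        + (u2 * g * (ρ/p)) *
            ((w0*(1 + γ/(γ-1)*(p/ρ)) + ρ*(γ/(γ-1)*((w4*ρ - p*w0)/ρ^2)))*g^2*u2
              + 2*ρ*(1 + γ/(γ-1)*(p/ρ))*(u1*w1+u2*w2+u3*w3)*g^4*u2
              + ρ*(1 + γ/(γ-1)*(p/ρ))*g^2*w2)
        + (u3 * g * (ρ/p)) *
            ((w0*(1 + γ/(γ-1)*(p/ρ)) + ρ*(γ/(γ-1)*((w4*ρ - p*w0)/ρ^2)))*g^2*u3
              + 2*ρ*(1 + γ/(γ-1)*(p/ρ))*(u1*w1+u2*w2+u3*w3)*g^4*u3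
              + ρ*(1 + γ/(γ-1)*(p/ρ))*g^2*w3)
        + (-(g * (ρ/p))) *
            ((w0*(1 + γ/(γ-1)*(p/ρ)) + ρ*(γ/(γ-1)*((w4*ρ - p*w0)/ρ^2)))*g^2
              + 2*ρ*(1 + γ/(γ-1)*(p/ρ))*(u1*w1+u2*w2+u3*w3)*g^4 - w4) := by
  linear_combination (norm := (field_simp; ring))
    ((ρ*g/p) * ((w0*(1 + γ/(γ-1)*(p/ρ)) + ρ*(γ/(γ-1)*((w4*ρ - p*w0)/ρ^2)))
        + 2*ρ*(1 + γ/(γ-1)*(p/ρ))*(u1*w1+u2*w2+u3*w3)*g^2)) * hg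

/-- The fderiv applied to a direction equals the derivative along the line. -/
lemma fderiv_line {f : (Fin 5 → ℝ) → ℝ} {W : Fin 5 → ℝ}
    (hf : DifferentiableAt ℝ f W) (w : Fin 5 → ℝ) :
    fderiv ℝ f W w = deriv (fun t : ℝ => f (W + t • w)) 0 := by
  have hline : HasDerivAt (fun t : ℝ => W + t • w) w 0 := by
    simpa using ((hasDerivAt_id (0:ℝ)).smul_const w).const_add W
  have h0 : W + (0:ℝ) • w = W := by simp
  have hf' : HasFDerivAt f (fderiv ℝ f W) ((fun t : ℝ => W + t • w) 0) := by
    simpa [h0] using hf.hasFDerivAt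
  have hc := hf'.comp_hasDerivAt 0 hline
  exact (hc.deriv).symm
/-- `V` is the gradient of the entropy `𝒰` with respect to the conservative
variables: for every admissible primitive state `W` and direction `w`,
`D𝒰(W)(w) = V(W) · DΦ(W)(w)` where `Φ = U` is the primitive-to-conservative map. -/
theorem entropy_gradient_wrt_conservative
    (γ : ℝ) (hγ : 1 < γ) (W : Fin 5 → ℝ)
    (hρ : 0 < W 0) (hp : 0 < W 4)
    (hu : W 1 ^ 2 + W 2 ^ 2 + W 3 ^ 2 < 1) :
    ∀ w : Fin 5 → ℝ,
      fderiv ℝ (entU γ) W w = dot5 (entV γ W) (fderiv ℝ (Umap γ) W w) := by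
  intro w
  have hγ1 : γ - 1 ≠ 0 := ne_of_gt (by linarith)
  have hQ0 : (0:ℝ) < 1 - (W 1 ^ 2 + W 2 ^ 2 + W 3 ^ 2) := by linarith
  have hsqpos : 0 < Real.sqrt (1 - (W 1 ^ 2 + W 2 ^ 2 + W 3 ^ 2)) := Real.sqrt_pos.mpr hQ0
  have hsqne : Real.sqrt (1 - (W 1 ^ 2 + W 2 ^ 2 + W 3 ^ 2)) ≠ 0 := ne_of_gt hsqpos
  have hg : Gm W ^ 2 * (1 - (W 1 ^ 2 + W 2 ^ 2 + W 3 ^ 2)) = 1 := by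
    simp only [Gm, div_pow, one_pow]
    rw [Real.sq_sqrt hQ0.le]
    field_simp
  have hslog : Real.log (W 4 * W 0 ^ (-γ)) = Real.log (W 4) - γ * Real.log (W 0) := by
    rw [Real.log_mul hp.ne' (Real.rpow_pos_of_pos hρ (-γ)).ne', Real.log_rpow hρ]
    ring
  -- 5-D differentiability of the building blocks
  have hxd : ∀ i : Fin 5, DifferentiableAt ℝ (fun x : Fin 5 → ℝ => x i) W :=
    fun i => (differentiable_apply i).differentiableAt
  have hQd : DifferentiableAt ℝ (fun x : Fin 5 → ℝ => 1 - (x 1 ^ 2 + x 2 ^ 2 + x 3 ^ 2)) W :=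
    ((((hxd 1).pow 2).add ((hxd 2).pow 2)).add ((hxd 3).pow 2)).const_sub 1
  have hsqd : DifferentiableAt ℝ (fun x : Fin 5 → ℝ => Real.sqrt (1 - (x 1 ^ 2 + x 2 ^ 2 + x 3 ^ 2))) W :=
    ((Real.hasDerivAt_sqrt hQ0.ne').differentiableAt).comp W hQd
  have hGmd : DifferentiableAt ℝ Gm W := by
    have h : DifferentiableAt ℝ (fun x : Fin 5 → ℝ => 1 / Real.sqrt (1 - (x 1 ^ 2 + x 2 ^ 2 + x 3 ^ 2))) W := by
      simp only [one_div]; exact hsqd.inv hsqne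
    exact h
  have henthd : DifferentiableAt ℝ (enth γ) W := by
    have h : DifferentiableAt ℝ (fun x : Fin 5 → ℝ => 1 + γ / (γ - 1) * (x 4 / x 0)) W := by
      simp only [div_eq_mul_inv]
      exact (((hxd 4).mul ((hxd 0).inv hρ.ne')).const_mul _).const_add 1
    exact h
  have e0 : (fun x : Fin 5 → ℝ => Umap γ x 0) = fun x => x 0 * Gm x := by
    funext x; simp [Umap]
  have e1 : (fun x : Fin 5 → ℝ => Umap γ x 1) = fun x => x 0 * enth γ x * Gm x ^ 2 * x 1 := by
    funext x; simp [Umap]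
  have e2 : (fun x : Fin 5 → ℝ => Umap γ x 2) = fun x => x 0 * enth γ x * Gm x ^ 2 * x 2 := by
    funext x; simp [Umap]
  have e3 : (fun x : Fin 5 → ℝ => Umap γ x 3) = fun x => x 0 * enth γ x * Gm x ^ 2 * x 3 := by
    funext x; simp [Umap]
  have e4 : (fun x : Fin 5 → ℝ => Umap γ x 4) = fun x => x 0 * enth γ x * Gm x ^ 2 - x 4 := by
    funext x; simp [Umap]
  have hU0d : DifferentiableAt ℝ (fun x => Umap γ x 0) W := by
    rw [e0]; exact (hxd 0).mul hGmd
  have hU1d : DifferentiableAt ℝ (fun x => Umap γ x 1) W := by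
    rw [e1]; exact (((hxd 0).mul henthd).mul (hGmd.pow 2)).mul (hxd 1)
  have hU2d : DifferentiableAt ℝ (fun x => Umap γ x 2) W := by
    rw [e2]; exact (((hxd 0).mul henthd).mul (hGmd.pow 2)).mul (hxd 2)
  have hU3d : DifferentiableAt ℝ (fun x => Umap γ x 3) W := by
    rw [e3]; exact (((hxd 0).mul henthd).mul (hGmd.pow 2)).mul (hxd 3)
  have hU4d : DifferentiableAt ℝ (fun x => Umap γ x 4) W := by
    rw [e4]; exact (((hxd 0).mul henthd).mul (hGmd.pow 2)).sub (hxd 4)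
  have hcomp : ∀ i : Fin 5, DifferentiableAt ℝ (fun x => Umap γ x i) W := by
    intro i; fin_cases i
    exacts [hU0d, hU1d, hU2d, hU3d, hU4d]
  -- differentiability of the smoothed entropy
  have hFd : DifferentiableAt ℝ
      (fun x : Fin 5 → ℝ => -(x 0 * Gm x * (Real.log (x 4) - γ * Real.log (x 0))) / (γ - 1)) W := by
    have hlog4 : DifferentiableAt ℝ (fun x : Fin 5 → ℝ => Real.log (x 4)) W :=
      (hxd 4).log hp.ne'
    have hlog0 : DifferentiableAt ℝ (fun x : Fin 5 → ℝ => Real.log (x 0)) W :=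
      (hxd 0).log hρ.ne'
    simp only [div_eq_mul_inv]
    exact ((((hxd 0).mul hGmd).mul (hlog4.sub (hlog0.const_mul γ))).neg).mul_const _
  -- entU agrees near W with the smoothed version
  have hopen : IsOpen {x : Fin 5 → ℝ | 0 < x 0 ∧ 0 < x 4} :=
    (isOpen_lt continuous_const (continuous_apply 0)).and
      (isOpen_lt continuous_const (continuous_apply 4))
  have hEq : entU γ =ᶠ[nhds W]
      (fun x : Fin 5 → ℝ => -(x 0 * Gm x * (Real.log (x 4) - γ * Real.log (x 0))) / (γ - 1)) := by
    filter_upwards [hopen.mem_nhds ⟨hρ, hp⟩] with x hx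
    have hl : Real.log (x 4 * x 0 ^ (-γ)) = Real.log (x 4) - γ * Real.log (x 0) := by
      rw [Real.log_mul hx.2.ne' (Real.rpow_pos_of_pos hx.1 (-γ)).ne', Real.log_rpow hx.1]
      ring
    simp only [entU, hl]
  -- 1-D derivatives along the line t ↦ W + t • w
  have hpt : ∀ (t : ℝ) (i : Fin 5), (W + t • w) i = W i + t * w i := fun t i => by simp
  have hA : ∀ i : Fin 5, HasDerivAt (fun t : ℝ => (W + t • w) i) (w i) 0 := by
    intro i
    simp only [hpt]
    simpa using ((hasDerivAt_id (0:ℝ)).mul_const (w i)).const_add (W i)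
  have hQl : HasDerivAt
      (fun t : ℝ => 1 - ((W + t • w) 1 ^ 2 + (W + t • w) 2 ^ 2 + (W + t • w) 3 ^ 2))
      (-(2 * (W 1 * w 1 + W 2 * w 2 + W 3 * w 3))) 0 := by
    have h := ((((hA 1).pow 2).add ((hA 2).pow 2)).add ((hA 3).pow 2)).const_sub 1
    refine HasDerivAt.congr_deriv h ?_
    simp
    ring
  have hsql : HasDerivAt
      (fun t : ℝ => Real.sqrt (1 - ((W + t • w) 1 ^ 2 + (W + t • w) 2 ^ 2 + (W + t • w) 3 ^ 2)))
      (1 / (2 * Real.sqrt (1 - (W 1 ^ 2 + W 2 ^ 2 + W 3 ^ 2)))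
        * (-(2 * (W 1 * w 1 + W 2 * w 2 + W 3 * w 3)))) 0 := by
    have hne : (1 : ℝ) - ((W + (0:ℝ) • w) 1 ^ 2 + (W + (0:ℝ) • w) 2 ^ 2 + (W + (0:ℝ) • w) 3 ^ 2) ≠ 0 := by
      simpa using hQ0.ne'
    have h := (Real.hasDerivAt_sqrt hne).comp 0 hQl
    refine HasDerivAt.congr_deriv h ?_
    simp
  have hGl : HasDerivAt (fun t : ℝ => Gm (W + t • w))
      ((W 1 * w 1 + W 2 * w 2 + W 3 * w 3) * Gm W ^ 3) 0 := by
    simp only [Gm]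
    have hne : Real.sqrt (1 - ((W + (0:ℝ) • w) 1 ^ 2 + (W + (0:ℝ) • w) 2 ^ 2 + (W + (0:ℝ) • w) 3 ^ 2)) ≠ 0 := by
      simpa using hsqne
    have h := (hasDerivAt_const (0:ℝ) (1:ℝ)).div hsql hne
    refine HasDerivAt.congr_deriv h ?_
    simp
    generalize hgen : Real.sqrt (1 - (W 1 ^ 2 + W 2 ^ 2 + W 3 ^ 2)) = σ
    have hσ : σ ≠ 0 := hgen ▸ hsqne
    field_simp [hσ]
  have hHl : HasDerivAt (fun t : ℝ => enth γ (W + t • w))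
      (γ / (γ - 1) * ((w 4 * W 0 - W 4 * w 0) / W 0 ^ 2)) 0 := by
    simp only [enth]
    have hne : (W + (0:ℝ) • w) 0 ≠ 0 := by simpa using hρ.ne'
    have h := (((hA 4).div (hA 0) hne).const_mul (γ / (γ - 1))).const_add 1
    refine HasDerivAt.congr_deriv h ?_
    simp
  -- line derivatives of the conservative components
  have hA0 : HasDerivAt (fun t : ℝ => (W + t • w) 0) (w 0) 0 := hA 0
  have hU0l : HasDerivAt (fun t : ℝ => Umap γ (W + t • w) 0)
      (w 0 * Gm W + W 0 * ((W 1 * w 1 + W 2 * w 2 + W 3 * w 3) * Gm W ^ 3)) 0 := by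
    have he : (fun t : ℝ => Umap γ (W + t • w) 0) = fun t => (W + t • w) 0 * Gm (W + t • w) := by
      funext t; simp [Umap]
    rw [he]
    have h := (hA 0).mul hGl
    refine HasDerivAt.congr_deriv h ?_
    simp
  have hprod : HasDerivAt (fun t : ℝ => (W + t • w) 0 * enth γ (W + t • w) * Gm (W + t • w) ^ 2)
      ((w 0 * enth γ W + W 0 * (γ / (γ - 1) * ((w 4 * W 0 - W 4 * w 0) / W 0 ^ 2))) * Gm W ^ 2
        + 2 * (W 0 * enth γ W) * ((W 1 * w 1 + W 2 * w 2 + W 3 * w 3) * Gm W ^ 3) * Gm W) 0 := by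
    have h := ((hA 0).mul hHl).mul (hGl.pow 2)
    refine HasDerivAt.congr_deriv h ?_
    simp
    ring
  have hU1l : HasDerivAt (fun t : ℝ => Umap γ (W + t • w) 1)
      ((w 0 * enth γ W + W 0 * (γ / (γ - 1) * ((w 4 * W 0 - W 4 * w 0) / W 0 ^ 2))) * Gm W ^ 2 * W 1
        + 2 * W 0 * enth γ W * (W 1 * w 1 + W 2 * w 2 + W 3 * w 3) * Gm W ^ 4 * W 1
        + W 0 * enth γ W * Gm W ^ 2 * w 1) 0 := by
    have he : (fun t : ℝ => Umap γ (W + t • w) 1)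
        = fun t => (W + t • w) 0 * enth γ (W + t • w) * Gm (W + t • w) ^ 2 * (W + t • w) 1 := by
      funext t; simp [Umap]
    rw [he]
    have h := hprod.mul (hA 1)
    refine HasDerivAt.congr_deriv h ?_
    simp
    ring
  have hU2l : HasDerivAt (fun t : ℝ => Umap γ (W + t • w) 2)
      ((w 0 * enth γ W + W 0 * (γ / (γ - 1) * ((w 4 * W 0 - W 4 * w 0) / W 0 ^ 2))) * Gm W ^ 2 * W 2
        + 2 * W 0 * enth γ W * (W 1 * w 1 + W 2 * w 2 + W 3 * w 3) * Gm W ^ 4 * W 2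
        + W 0 * enth γ W * Gm W ^ 2 * w 2) 0 := by
    have he : (fun t : ℝ => Umap γ (W + t • w) 2)
        = fun t => (W + t • w) 0 * enth γ (W + t • w) * Gm (W + t • w) ^ 2 * (W + t • w) 2 := by
      funext t; simp [Umap]
    rw [he]
    have h := hprod.mul (hA 2)
    refine HasDerivAt.congr_deriv h ?_
    simp
    ring
  have hU3l : HasDerivAt (fun t : ℝ => Umap γ (W + t • w) 3)
      ((w 0 * enth γ W + W 0 * (γ / (γ - 1) * ((w 4 * W 0 - W 4 * w 0) / W 0 ^ 2))) * Gm W ^ 2 * W 3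
        + 2 * W 0 * enth γ W * (W 1 * w 1 + W 2 * w 2 + W 3 * w 3) * Gm W ^ 4 * W 3
        + W 0 * enth γ W * Gm W ^ 2 * w 3) 0 := by
    have he : (fun t : ℝ => Umap γ (W + t • w) 3)
        = fun t => (W + t • w) 0 * enth γ (W + t • w) * Gm (W + t • w) ^ 2 * (W + t • w) 3 := by
      funext t; simp [Umap]
    rw [he]
    have h := hprod.mul (hA 3)
    refine HasDerivAt.congr_deriv h ?_
    simp
    ring
  have hU4l : HasDerivAt (fun t : ℝ => Umap γ (W + t • w) 4)
      ((w 0 * enth γ W + W 0 * (γ / (γ - 1) * ((w 4 * W 0 - W 4 * w 0) / W 0 ^ 2))) * Gm W ^ 2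
        + 2 * W 0 * enth γ W * (W 1 * w 1 + W 2 * w 2 + W 3 * w 3) * Gm W ^ 4 - w 4) 0 := by
    have he : (fun t : ℝ => Umap γ (W + t • w) 4)
        = fun t => (W + t • w) 0 * enth γ (W + t • w) * Gm (W + t • w) ^ 2 - (W + t • w) 4 := by
      funext t; simp [Umap]
    rw [he]
    have h := hprod.sub (hA 4)
    refine HasDerivAt.congr_deriv h ?_
    simp
    ring
  -- line derivative of the (smoothed) entropy
  have hFl : HasDerivAt
      (fun t : ℝ => -((W + t • w) 0 * Gm (W + t • w)
          * (Real.log ((W + t • w) 4) - γ * Real.log ((W + t • w) 0))) / (γ - 1))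
      (-((w 0 * Gm W + W 0 * ((W 1 * w 1 + W 2 * w 2 + W 3 * w 3) * Gm W ^ 3))
            * (Real.log (W 4) - γ * Real.log (W 0))
          + W 0 * Gm W * (w 4 / W 4 - γ * (w 0 / W 0))) / (γ - 1)) 0 := by
    have hlog4 : HasDerivAt (fun t : ℝ => Real.log ((W + t • w) 4)) (w 4 / W 4) 0 := by
      have hne : (W + (0:ℝ) • w) 4 ≠ 0 := by simpa using hp.ne'
      have h := (Real.hasDerivAt_log hne).comp (0:ℝ) (hA 4)
      refine HasDerivAt.congr_deriv h ?_
      simp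
      try ring
    have hlog0 : HasDerivAt (fun t : ℝ => Real.log ((W + t • w) 0)) (w 0 / W 0) 0 := by
      have hne : (W + (0:ℝ) • w) 0 ≠ 0 := by simpa using hρ.ne'
      have h := (Real.hasDerivAt_log hne).comp (0:ℝ) (hA 0)
      refine HasDerivAt.congr_deriv h ?_
      simp
      try ring
    have h := ((((hA 0).mul hGl).mul (hlog4.sub (hlog0.const_mul γ))).neg).div_const (γ - 1)
    refine HasDerivAt.congr_deriv h ?_
    simp
    try ring
  -- put the pieces together
  have hLHS : fderiv ℝ (entU γ) W w
      = -((w 0 * Gm W + W 0 * ((W 1 * w 1 + W 2 * w 2 + W 3 * w 3) * Gm W ^ 3))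
            * (Real.log (W 4) - γ * Real.log (W 0))
          + W 0 * Gm W * (w 4 / W 4 - γ * (w 0 / W 0))) / (γ - 1) := by
    rw [hEq.fderiv_eq, fderiv_line hFd w]
    exact hFl.deriv
  have hpi : fderiv ℝ (Umap γ) W
      = ContinuousLinearMap.pi (fun i => fderiv ℝ (fun x => Umap γ x i) W) := fderiv_pi hcomp
  have hcompval : ∀ (i : Fin 5) (d : ℝ), HasDerivAt (fun t : ℝ => Umap γ (W + t • w) i) d 0
      → fderiv ℝ (fun x => Umap γ x i) W w = d := by
    intro i d hd
    rw [fderiv_line (hcomp i) w]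
    exact hd.deriv
  rw [hLHS, hpi]
  simp only [dot5, ContinuousLinearMap.pi_apply]
  rw [hcompval 0 _ hU0l, hcompval 1 _ hU1l, hcompval 2 _ hU2l, hcompval 3 _ hU3l,
    hcompval 4 _ hU4l]
  simp only [entV, Matrix.cons_val_zero, Matrix.cons_val_one, Matrix.head_cons,
    Matrix.cons_val_two, Matrix.cons_val_three, Matrix.cons_val_four, Matrix.tail_cons,
    Matrix.head_fin_const]
  rw [hslog]
  simp only [enth]
  have K := key_id γ (W 0) (W 4) (W 1) (W 2) (W 3) (w 0) (w 1) (w 2) (w 3) (w 4) (Gm W)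
    (Real.log (W 4) - γ * Real.log (W 0)) hγ1 hρ.ne' hp.ne' hg
  linear_combination K
end
end

section
/- Let γ > 1 and let Ω_W ⊂ ℝ⁵ be the open set of primitive states W = (ρ, u_x, u_y, u_z, p) with ρ > 0, p > 0 and u_x² + u_y² + u_z² < 1. Let g : Ω_W → ℝ⁵, g(W) = f^x(W), be the x-directional flux map and let ℱ^x : Ω_W → ℝ be the x-entropy flux. Then for every W ∈ Ω_W and every direction w ∈ ℝ⁵, the Fréchet derivatives satisfy Dℱ^x(W)(w) = V(W) · Dg(W)(w), where · is the dot product on ℝ⁵; that is, (𝒰, ℱ^x) is an entropy–entropy flux pair with entropy variables V. -/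
noncomputable section

set_option maxHeartbeats 4000000


/-- The x-directional flux `f^x(W) = (D u_x, M_x u_x + p, M_y u_x, M_z u_x, M_x)`. -/
def fluxX (γ : ℝ) (W : Fin 5 → ℝ) : Fin 5 → ℝ :=
  ![W 0 * Gm W * W 1,
    W 0 * enth γ W * Gm W ^ 2 * W 1 * W 1 + W 4,
    W 0 * enth γ W * Gm W ^ 2 * W 2 * W 1,
    W 0 * enth γ W * Gm W ^ 2 * W 3 * W 1,
    W 0 * enth γ W * Gm W ^ 2 * W 1]

/-- The x-directional entropy flux `ℱ^x = −ρΓ s u_x/(γ−1)` with `s = ln(p ρ^{-γ})`. -/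
def entFx (γ : ℝ) (W : Fin 5 → ℝ) : ℝ :=
  -(W 0 * Gm W * Real.log (W 4 * W 0 ^ (-γ)) * W 1) / (γ - 1)

/-- `(𝒰, ℱ^x)` is an entropy–entropy flux pair with entropy variables `V`: for every
admissible primitive state `W` and direction `w`,
`Dℱ^x(W)(w) = V(W) · Df^x(W)(w)`. -/
theorem entropy_flux_pair_x
    (γ : ℝ) (hγ : 1 < γ) (W : Fin 5 → ℝ)
    (hρ : 0 < W 0) (hp : 0 < W 4)
    (hu : W 1 ^ 2 + W 2 ^ 2 + W 3 ^ 2 < 1) :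
    ∀ w : Fin 5 → ℝ,
      fderiv ℝ (entFx γ) W w = dot5 (entV γ W) (fderiv ℝ (fluxX γ) W w) := by
  intro w
  have hg1 : (0:ℝ) < γ - 1 := by linarith
  have hg1' : (γ:ℝ) - 1 ≠ 0 := ne_of_gt hg1
  have ha : W 0 ≠ 0 := ne_of_gt hρ
  have he : W 4 ≠ 0 := ne_of_gt hp
  have hq : (0:ℝ) < 1 - (W 1 ^ 2 + W 2 ^ 2 + W 3 ^ 2) := by linarith
  have ht : 0 < Real.sqrt (1 - (W 1 ^ 2 + W 2 ^ 2 + W 3 ^ 2)) := Real.sqrt_pos.2 hq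
  have ht0 : Real.sqrt (1 - (W 1 ^ 2 + W 2 ^ 2 + W 3 ^ 2)) ≠ 0 := ne_of_gt ht
  have h0 := hasFDerivAt_apply (𝕜 := ℝ) (0 : Fin 5) W
  have h1 := hasFDerivAt_apply (𝕜 := ℝ) (1 : Fin 5) W
  have h2 := hasFDerivAt_apply (𝕜 := ℝ) (2 : Fin 5) W
  have h3 := hasFDerivAt_apply (𝕜 := ℝ) (3 : Fin 5) W
  have h4 := hasFDerivAt_apply (𝕜 := ℝ) (4 : Fin 5) W
  have hq' := ((((hasDerivAt_pow 2 (W 1)).comp_hasFDerivAt W h1).add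
      ((hasDerivAt_pow 2 (W 2)).comp_hasFDerivAt W h2)).add
      ((hasDerivAt_pow 2 (W 3)).comp_hasFDerivAt W h3)).const_sub (1:ℝ)
  have hS := (Real.hasDerivAt_sqrt (ne_of_gt hq)).comp_hasFDerivAt W hq'
  have hGi := (hasDerivAt_inv (ne_of_gt ht)).comp_hasFDerivAt W hS
  have hGone := hGi.const_mul (1:ℝ)
  have hG2 := (hasDerivAt_pow 2 _).comp_hasFDerivAt W hGone
  have hinv0 := (hasDerivAt_inv ha).comp_hasFDerivAt W h0
  have hH := ((h4.mul hinv0).const_mul (γ/(γ-1))).const_add (1:ℝ)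
  have hc0 := (h0.mul hGone).mul h1
  have hc1 := ((((h0.mul hH).mul hG2).mul h1).mul h1).add h4
  have hc2 := (((h0.mul hH).mul hG2).mul h2).mul h1
  have hc3 := (((h0.mul hH).mul hG2).mul h3).mul h1
  have hc4 := ((h0.mul hH).mul hG2).mul h1
  have hlog0 := (Real.hasDerivAt_log ha).comp_hasFDerivAt W h0
  have hlog4 := (Real.hasDerivAt_log he).comp_hasFDerivAt W h4
  have hs' := hlog4.sub (hlog0.const_mul γ)
  have hEnt := ((((h0.mul hGone).mul hs').mul h1).neg).mul_const ((γ-1)⁻¹)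
  -- flux side
  have hcomps : ∀ i, DifferentiableAt ℝ (fun x => fluxX γ x i) W := by
    intro i
    fin_cases i
    exacts [hc0.differentiableAt, hc1.differentiableAt, hc2.differentiableAt,
      hc3.differentiableAt, hc4.differentiableAt]
  have hdiffF : DifferentiableAt ℝ (fluxX γ) W := differentiableAt_pi.2 hcomps
  have hFD := hdiffF.hasFDerivAt
  have k0 := ContinuousLinearMap.ext_iff.1 ((hasFDerivAt_pi'.1 hFD 0).unique hc0) w
  have k1 := ContinuousLinearMap.ext_iff.1 ((hasFDerivAt_pi'.1 hFD 1).unique hc1) w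
  have k2 := ContinuousLinearMap.ext_iff.1 ((hasFDerivAt_pi'.1 hFD 2).unique hc2) w
  have k3 := ContinuousLinearMap.ext_iff.1 ((hasFDerivAt_pi'.1 hFD 3).unique hc3) w
  have k4 := ContinuousLinearMap.ext_iff.1 ((hasFDerivAt_pi'.1 hFD 4).unique hc4) w
  -- entropy side
  have hmem : {x : Fin 5 → ℝ | 0 < x 0 ∧ 0 < x 4} ∈ nhds W :=
    ((isOpen_lt continuous_const (continuous_apply 0)).inter
      (isOpen_lt continuous_const (continuous_apply 4))).mem_nhds ⟨hρ, hp⟩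
  have hEqev : entFx γ =ᶠ[nhds W] (fun x : Fin 5 → ℝ =>
      -(x 0 * (1 * (Real.sqrt (1 - (x 1 ^ 2 + x 2 ^ 2 + x 3 ^ 2)))⁻¹) *
        (Real.log (x 4) - γ * Real.log (x 0)) * x 1) * (γ - 1)⁻¹) := by
    filter_upwards [hmem] with x hx
    rw [entFx, Real.log_mul (ne_of_gt hx.2) (ne_of_gt (Real.rpow_pos_of_pos hx.1 _)),
      Real.log_rpow hx.1, Gm]
    ring
  have hdiffE : DifferentiableAt ℝ (fun x : Fin 5 → ℝ =>
      -(x 0 * (1 * (Real.sqrt (1 - (x 1 ^ 2 + x 2 ^ 2 + x 3 ^ 2)))⁻¹) *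
        (Real.log (x 4) - γ * Real.log (x 0)) * x 1) * (γ - 1)⁻¹) W := hEnt.differentiableAt
  have kE := ContinuousLinearMap.ext_iff.1 (hdiffE.hasFDerivAt.unique hEnt) w
  have hlogW : Real.log (W 4 * W 0 ^ (-γ)) = Real.log (W 4) - γ * Real.log (W 0) := by
    rw [Real.log_mul he (ne_of_gt (Real.rpow_pos_of_pos hρ _)), Real.log_rpow hρ]; ring
  simp only [ContinuousLinearMap.coe_comp', Function.comp_apply,
    ContinuousLinearMap.proj_apply] at k0 k1 k2 k3 k4
  simp only [ContinuousLinearMap.add_apply, ContinuousLinearMap.smul_apply,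
    ContinuousLinearMap.neg_apply, ContinuousLinearMap.sub_apply,
    ContinuousLinearMap.proj_apply, smul_eq_mul, ContinuousLinearMap.coe_smul',
    Pi.smul_apply, ContinuousLinearMap.zero_apply, ContinuousLinearMap.coe_comp',
    Function.comp_apply] at k0 k1 k2 k3 k4 kE
  have e2 : Real.sqrt (1 - (W 1 ^ 2 + W 2 ^ 2 + W 3 ^ 2)) ^ 2 = 1 - (W 1 ^ 2 + W 2 ^ 2 + W 3 ^ 2) :=
    Real.sq_sqrt hq.le
  set t := Real.sqrt (1 - (W 1 ^ 2 + W 2 ^ 2 + W 3 ^ 2)) with htd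
  have hV : entV γ W = ![
      (t * ((γ - (Real.log (W 4) - γ * Real.log (W 0))) * W 4 + (γ - 1) * W 0)) /
        ((γ - 1) * (W 4 * t)),
      ((γ - 1) * W 0 * W 1) / ((γ - 1) * (W 4 * t)),
      ((γ - 1) * W 0 * W 2) / ((γ - 1) * (W 4 * t)),
      ((γ - 1) * W 0 * W 3) / ((γ - 1) * (W 4 * t)),
      (-((γ - 1) * W 0)) / ((γ - 1) * (W 4 * t))] := by
    funext i
    fin_cases i <;>
      simp only [entV, Gm, hlogW, Matrix.cons_val_zero, Matrix.cons_val_one, Matrix.head_cons,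
        Matrix.cons_val_two, Matrix.cons_val_three, Matrix.cons_val_four, Matrix.tail_cons,
        Matrix.head_fin_const, Fin.isValue] <;>
      field_simp <;> ring
  have K0 : fderiv ℝ (fluxX γ) W w 0 =
      ((γ - 1) * W 0 ^ 2 * W 4 * ((w 0 * W 1 + W 0 * w 1) * t ^ 3 +
        W 0 * W 1 * (W 1 * w 1 + W 2 * w 2 + W 3 * w 3) * t)) /
      ((γ - 1) * (W 0 ^ 2 * (W 4 * t ^ 4))) := by
    rw [k0]; norm_num; field_simp; ring
  have K1 : fderiv ℝ (fluxX γ) W w 1 =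
      (W 4 * t ^ 2 * W 1 ^ 2 * (W 0 * (w 0 * ((γ - 1) * W 0 + γ * W 4) + γ * (W 0 * w 4 - W 4 * w 0)))
        + 2 * W 4 * W 0 ^ 2 * W 1 ^ 2 * (W 1 * w 1 + W 2 * w 2 + W 3 * w 3) * ((γ - 1) * W 0 + γ * W 4)
        + 2 * W 4 * W 0 ^ 2 * W 1 * w 1 * t ^ 2 * ((γ - 1) * W 0 + γ * W 4)
        + (γ - 1) * W 0 ^ 2 * W 4 * t ^ 4 * w 4) /
      ((γ - 1) * (W 0 ^ 2 * (W 4 * t ^ 4))) := by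
    rw [k1]; norm_num; field_simp; ring
  have K2 : fderiv ℝ (fluxX γ) W w 2 =
      (W 4 * t ^ 2 * W 2 * W 1 * (W 0 * (w 0 * ((γ - 1) * W 0 + γ * W 4) + γ * (W 0 * w 4 - W 4 * w 0)))
        + 2 * W 4 * W 0 ^ 2 * W 2 * W 1 * (W 1 * w 1 + W 2 * w 2 + W 3 * w 3) * ((γ - 1) * W 0 + γ * W 4)
        + W 4 * W 0 ^ 2 * (w 2 * W 1 + W 2 * w 1) * t ^ 2 * ((γ - 1) * W 0 + γ * W 4)) /
      ((γ - 1) * (W 0 ^ 2 * (W 4 * t ^ 4))) := by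
    rw [k2]; norm_num; field_simp; ring
  have K3 : fderiv ℝ (fluxX γ) W w 3 =
      (W 4 * t ^ 2 * W 3 * W 1 * (W 0 * (w 0 * ((γ - 1) * W 0 + γ * W 4) + γ * (W 0 * w 4 - W 4 * w 0)))
        + 2 * W 4 * W 0 ^ 2 * W 3 * W 1 * (W 1 * w 1 + W 2 * w 2 + W 3 * w 3) * ((γ - 1) * W 0 + γ * W 4)
        + W 4 * W 0 ^ 2 * (w 3 * W 1 + W 3 * w 1) * t ^ 2 * ((γ - 1) * W 0 + γ * W 4)) /
      ((γ - 1) * (W 0 ^ 2 * (W 4 * t ^ 4))) := by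
    rw [k3]; norm_num; field_simp; ring
  have K4 : fderiv ℝ (fluxX γ) W w 4 =
      (W 4 * t ^ 2 * W 1 * (W 0 * (w 0 * ((γ - 1) * W 0 + γ * W 4) + γ * (W 0 * w 4 - W 4 * w 0)))
        + 2 * W 4 * W 0 ^ 2 * W 1 * (W 1 * w 1 + W 2 * w 2 + W 3 * w 3) * ((γ - 1) * W 0 + γ * W 4)
        + W 4 * W 0 ^ 2 * w 1 * t ^ 2 * ((γ - 1) * W 0 + γ * W 4)) /
      ((γ - 1) * (W 0 ^ 2 * (W 4 * t ^ 4))) := by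
    rw [k4]; norm_num; field_simp; ring
  have KE : fderiv ℝ (entFx γ) W w =
      (-((γ - 1) * W 0 ^ 2 * W 4 * t ^ 4 *
          ((W 4 * w 0 * (Real.log (W 4) - γ * Real.log (W 0)) + W 0 * w 4 - γ * W 4 * w 0) * W 1 +
            W 4 * W 0 * (Real.log (W 4) - γ * Real.log (W 0)) * w 1))
        - (γ - 1) * W 0 ^ 3 * W 4 ^ 2 * t ^ 2 * (Real.log (W 4) - γ * Real.log (W 0)) * W 1 *
            (W 1 * w 1 + W 2 * w 2 + W 3 * w 3)) /
      ((γ - 1) * (W 4 * t) * ((γ - 1) * (W 0 ^ 2 * (W 4 * t ^ 4)))) := by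
    rw [hEqev.fderiv_eq, kE]; norm_num; field_simp; ring
  rw [KE]
  simp only [dot5]
  rw [hV]
  simp only [Matrix.cons_val_zero, Matrix.cons_val_one, Matrix.head_cons, Matrix.cons_val_two,
    Matrix.cons_val_three, Matrix.cons_val_four, Matrix.tail_cons, Matrix.head_fin_const,
    Fin.isValue]
  rw [K0, K1, K2, K3, K4]
  simp only [div_mul_div_comm]
  simp only [← add_div]
  congr 1
  linear_combination ((W 0) ^ 3 * (W 4) ^ 2 * γ * t ^ 2 * (w 1) + (-1) * (W 0) ^ 3 * (W 4) ^ 2 * γ ^ 2 * t ^ 2 * (w 1) + (-1) * (W 0) ^ 3 * (W 1) * (W 4) * t ^ 2 * (w 0) + (W 0) ^ 3 * (W 1) * (W 4) * γ * t ^ 2 * (w 4) + 2 * (W 0) ^ 3 * (W 1) * (W 4) * γ * t ^ 2 * (w 0) + (-1) * (W 0) ^ 3 * (W 1) * (W 4) * γ ^ 2 * t ^ 2 * (w 4) + (-1) * (W 0) ^ 3 * (W 1) * (W 4) * γ ^ 2 * t ^ 2 * (w 0) + 2 * (W 0) ^ 3 * (W 1) * (W 3) * (W 4) ^ 2 * γ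 * (w 3) + (-2) * (W 0) ^ 3 * (W 1) * (W 3) * (W 4) ^ 2 * γ ^ 2 * (w 3) + 2 * (W 0) ^ 3 * (W 1) * (W 2) * (W 4) ^ 2 * γ * (w 2) + (-2) * (W 0) ^ 3 * (W 1) * (W 2) * (W 4) ^ 2 * γ ^ 2 * (w 2) + 2 * (W 0) ^ 3 * (W 1) ^ 2 * (W 4) ^ 2 * γ * (w 1) + (-2) * (W 0) ^ 3 * (W 1) ^ 2 * (W 4) ^ 2 * γ ^ 2 * (w 1) + (-1) * (W 0) ^ 4 * (W 4) * t ^ 2 * (w 1) + 2 * (W 0) ^ 4 * (W 4) * γ * t ^ 2 * (w 1) + (-1) * (W 0) ^ 4 * (W 4) * γ ^ 2 * t ^ 2 * (w 1) + (-2) * (W 0) ^ 4 * (W 1) * (W 3) * (W 4) * (w 3) + 4 * (W 0) ^ 4 * (W 1) * (W 3) * (W 4) * γ * (w 3) + (-2) * (W 0) ^ 4 * (W 1) * (W 3) * (W 4) * γ ^ 2 * (w 3) + (-2) * (W 0) ^ 4 * (W 1) * (W 2) * (W 4) * (w 2) + 4 * (W 0) ^ 4 * (W 1) * (W 2) * (W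 4) * γ * (w 2) + (-2) * (W 0) ^ 4 * (W 1) * (W 2) * (W 4) * γ ^ 2 * (w 2) + (-2) * (W 0) ^ 4 * (W 1) ^ 2 * (W 4) * (w 1) + 4 * (W 0) ^ 4 * (W 1) ^ 2 * (W 4) * γ * (w 1) + (-2) * (W 0) ^ 4 * (W 1) ^ 2 * (W 4) * γ ^ 2 * (w 1)) * e2
end
end

section
/- Let γ > 1 and let (ρ, u_x, u_y, u_z, p, E, B) be a smooth solution of the 1-D relativistic fluid equations with Lorentz-force source. Then the specific entropy s = ln(p ρ^{−γ}) satisfies the transport equation ∂_t s + u_x ∂_x s = 0 at every point of ℝ × ℝ. -/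
noncomputable section

/-- Partial derivative in `t` (first coordinate). -/
def ptd (f : ℝ × ℝ → ℝ) (z : ℝ × ℝ) : ℝ := fderiv ℝ f z (1, 0)

/-- Partial derivative in `x` (second coordinate). -/
def pxd (f : ℝ × ℝ → ℝ) (z : ℝ × ℝ) : ℝ := fderiv ℝ f z (0, 1)

/-- Lorentz factor field. -/
def Gm3 (ux uy uz : ℝ × ℝ → ℝ) (z : ℝ × ℝ) : ℝ :=
  1 / Real.sqrt (1 - (ux z ^ 2 + uy z ^ 2 + uz z ^ 2))

/-- Specific enthalpy field. -/
def hent (γ : ℝ) (ρ p : ℝ × ℝ → ℝ) (z : ℝ × ℝ) : ℝ :=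
  1 + γ / (γ - 1) * (p z / ρ z)

lemma fd_mul (f g : ℝ × ℝ → ℝ) {z v : ℝ × ℝ}
    (hf : DifferentiableAt ℝ f z) (hg : DifferentiableAt ℝ g z) :
    fderiv ℝ (fun w => f w * g w) z v
      = fderiv ℝ f z v * g z + f z * fderiv ℝ g z v := by
  rw [fderiv_fun_mul hf hg]
  simp only [ContinuousLinearMap.add_apply, ContinuousLinearMap.smul_apply, smul_eq_mul]
  ring

lemma fd_sub (f g : ℝ × ℝ → ℝ) {z v : ℝ × ℝ}
    (hf : DifferentiableAt ℝ f z) (hg : DifferentiableAt ℝ g z) :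
    fderiv ℝ (fun w => f w - g w) z v
      = fderiv ℝ f z v - fderiv ℝ g z v := by
  rw [fderiv_fun_sub hf hg]; simp

lemma fd_sq (f : ℝ × ℝ → ℝ) {z v : ℝ × ℝ}
    (hf : DifferentiableAt ℝ f z) :
    fderiv ℝ (fun w => f w ^ 2) z v = 2 * f z * fderiv ℝ f z v := by
  have h : (fun w => f w ^ 2) = fun w => f w * f w := funext fun w => by ring
  rw [h, fd_mul f f hf hf]; ring

lemma Gm3_spec {ux uy uz : ℝ × ℝ → ℝ} {z : ℝ × ℝ}
    (hx : DifferentiableAt ℝ ux z) (hy : DifferentiableAt ℝ uy z)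
    (hz : DifferentiableAt ℝ uz z)
    (hu : ux z ^ 2 + uy z ^ 2 + uz z ^ 2 < 1) :
    DifferentiableAt ℝ (Gm3 ux uy uz) z ∧
    ∀ v, fderiv ℝ (Gm3 ux uy uz) z v
      = Gm3 ux uy uz z ^ 3 *
        (ux z * fderiv ℝ ux z v + uy z * fderiv ℝ uy z v + uz z * fderiv ℝ uz z v) := by
  have hq : (0:ℝ) ≤ ux z ^ 2 + uy z ^ 2 + uz z ^ 2 := by positivity
  have hY0 : 0 < 1 - (ux z ^ 2 + uy z ^ 2 + uz z ^ 2) := by linarith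
  have hs0 : 0 < Real.sqrt (1 - (ux z ^ 2 + uy z ^ 2 + uz z ^ 2)) := Real.sqrt_pos.2 hY0
  have h2x : HasFDerivAt (fun w => ux w ^ 2) ((ux z • fderiv ℝ ux z) + (ux z • fderiv ℝ ux z)) z := by
    simp only [pow_two]; exact hx.hasFDerivAt.mul hx.hasFDerivAt
  have h2y : HasFDerivAt (fun w => uy w ^ 2) ((uy z • fderiv ℝ uy z) + (uy z • fderiv ℝ uy z)) z := by
    simp only [pow_two]; exact hy.hasFDerivAt.mul hy.hasFDerivAt
  have h2z : HasFDerivAt (fun w => uz w ^ 2) ((uz z • fderiv ℝ uz z) + (uz z • fderiv ℝ uz z)) z := by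
    simp only [pow_two]; exact hz.hasFDerivAt.mul hz.hasFDerivAt
  have h1 : HasFDerivAt (fun w => 1 - (ux w ^ 2 + uy w ^ 2 + uz w ^ 2))
      (-(((ux z • fderiv ℝ ux z) + (ux z • fderiv ℝ ux z)) +
        ((uy z • fderiv ℝ uy z) + (uy z • fderiv ℝ uy z)) +
        ((uz z • fderiv ℝ uz z) + (uz z • fderiv ℝ uz z)))) z :=
    ((h2x.add h2y).add h2z).const_sub 1
  have hsq := h1.sqrt (ne_of_gt hY0)
  have hinv := (hasDerivAt_inv (ne_of_gt hs0)).comp_hasFDerivAt z hsq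
  have hG : HasFDerivAt (Gm3 ux uy uz)
      ((-(Real.sqrt (1 - (ux z ^ 2 + uy z ^ 2 + uz z ^ 2)) ^ 2)⁻¹) •
        ((1 / (2 * Real.sqrt (1 - (ux z ^ 2 + uy z ^ 2 + uz z ^ 2)))) •
          (-(((ux z • fderiv ℝ ux z) + (ux z • fderiv ℝ ux z)) +
            ((uy z • fderiv ℝ uy z) + (uy z • fderiv ℝ uy z)) +
            ((uz z • fderiv ℝ uz z) + (uz z • fderiv ℝ uz z)))))) z := by
    have hfe : Gm3 ux uy uz
        = fun w => (Real.sqrt (1 - (ux w ^ 2 + uy w ^ 2 + uz w ^ 2)))⁻¹ :=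
      funext fun w => one_div _
    rw [hfe]
    simpa only [Function.comp_def] using hinv
  refine ⟨hG.differentiableAt, fun v => ?_⟩
  rw [hG.fderiv]
  simp only [ContinuousLinearMap.smul_apply, ContinuousLinearMap.neg_apply,
    ContinuousLinearMap.add_apply, smul_eq_mul, Gm3]
  set S := Real.sqrt (1 - (ux z ^ 2 + uy z ^ 2 + uz z ^ 2)) with hSdef
  have hS2 : S ^ 2 = 1 - (ux z ^ 2 + uy z ^ 2 + uz z ^ 2) := Real.sq_sqrt hY0.le
  have hSne : S ≠ 0 := ne_of_gt hs0
  field_simp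
  ring_nf

lemma hent_spec {γ : ℝ} {ρ p : ℝ × ℝ → ℝ} {z : ℝ × ℝ}
    (hρ : DifferentiableAt ℝ ρ z) (hp : DifferentiableAt ℝ p z)
    (hρ0 : ρ z ≠ 0) (hγ0 : γ - 1 ≠ 0) :
    DifferentiableAt ℝ (hent γ ρ p) z ∧
    ∀ v, fderiv ℝ (hent γ ρ p) z v
      = γ / (γ - 1) * ((fderiv ℝ p z v * ρ z - p z * fderiv ℝ ρ z v) / ρ z ^ 2) := by
  have hinv := (hasDerivAt_inv hρ0).comp_hasFDerivAt z hρ.hasFDerivAt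
  have hdiv := hp.hasFDerivAt.mul hinv
  have hmul := hdiv.const_mul (γ / (γ - 1))
  have hadd := hmul.const_add 1
  have hfe : hent γ ρ p = fun w => 1 + γ / (γ - 1) * (p w * (ρ w)⁻¹) :=
    funext fun w => by unfold hent; ring
  have hH : HasFDerivAt (hent γ ρ p)
      ((γ / (γ - 1)) • (p z • ((-(ρ z ^ 2)⁻¹) • fderiv ℝ ρ z)
        + (ρ z)⁻¹ • fderiv ℝ p z)) z := by
    rw [hfe]
    simpa only [Function.comp_def, Pi.mul_apply] using hadd
  refine ⟨hH.differentiableAt, fun v => ?_⟩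
  rw [hH.fderiv]
  simp only [ContinuousLinearMap.smul_apply, ContinuousLinearMap.add_apply,
    ContinuousLinearMap.neg_apply, smul_eq_mul]
  field_simp
  ring

lemma key (γ a b c d P G h att ax bt bx ct cx dt dx Pt Px Gt Gx Ht Hx W Wt Wx S1 S2 S3 SE : ℝ)
    (hγ : 1 < γ) (ha : 0 < a) (hG : 0 < G)
    (hGt : Gt = G ^ 3 * (b * bt + c * ct + d * dt))
    (hGx : Gx = G ^ 3 * (b * bx + c * cx + d * dx))
    (hHt : Ht = γ / (γ - 1) * ((Pt * a - P * att) / a ^ 2))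
    (hHx : Hx = γ / (γ - 1) * ((Px * a - P * ax) / a ^ 2))
    (hW : W = a * h * G ^ 2)
    (hWt : Wt = att * h * G ^ 2 + a * Ht * G ^ 2 + 2 * a * h * G * Gt)
    (hWx : Wx = ax * h * G ^ 2 + a * Hx * G ^ 2 + 2 * a * h * G * Gx)
    (hy : G ^ 2 * (1 - (b ^ 2 + c ^ 2 + d ^ 2)) = 1)
    (hmass : att * G + a * Gt + (ax * G + a * Gx) * b + a * G * bx = 0)
    (hmx : Wt * b + W * bt + (Wx * b ^ 2 + 2 * W * b * bx) + Px = S1)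
    (hmy : Wt * c + W * ct + (Wx * b * c + W * (bx * c + b * cx)) = S2)
    (hmz : Wt * d + W * dt + (Wx * b * d + W * (bx * d + b * dx)) = S3)
    (hener : Wt - Pt + (Wx * b + W * bx) = SE)
    (hS : SE = b * S1 + c * S2 + d * S3) :
    Pt + b * Px = γ * P / a * (att + b * ax) := by
  have hG0 : G ≠ 0 := ne_of_gt hG
  have ha0 : a ≠ 0 := ne_of_gt ha
  have hγ0 : γ - 1 ≠ 0 := sub_ne_zero.2 (ne_of_gt hγ)
  subst hGt hGx hW hWt hWx hS
  have e1 : (att + b * ax) * h * G + a * (Ht + b * Hx) * G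
      + a * h * (G ^ 3 * (b * bt + c * ct + d * dt)
        + b * (G ^ 3 * (b * bx + c * cx + d * dx)))
      + a * h * bx * G - (Pt + b * Px) * G = 0 := by
    linear_combination (norm := ring_nf) G * hener - G * b * hmx - G * c * hmy - G * d * hmz
      - (((att * h + a * Ht) + (ax * h + a * Hx) * b) * G
        + 2 * a * h * (G ^ 3 * (b * bt + c * ct + d * dt)
          + b * (G ^ 3 * (b * bx + c * cx + d * dx)))
        + a * h * bx * G) * hy
  have e2 : a * (Ht + b * Hx) = Pt + b * Px := by
    have h2 : (a * (Ht + b * Hx) - (Pt + b * Px)) * G = 0 := by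
      linear_combination e1 - h * hmass
    rcases mul_eq_zero.mp h2 with h3 | h3
    · linarith
    · exact absurd h3 hG0
  rw [hHt, hHx] at e2
  field_simp at e2 ⊢
  have e3 : γ * (Pt * a - P * att) + b * (γ * (Px * a - P * ax))
      = (Pt + b * Px) * ((γ - 1) * a) := by
    apply mul_left_cancel₀ ha0
    linear_combination a * e2
  linear_combination e3

theorem entropy_transport
    (γ r : ℝ) (ρ ux uy uz p : ℝ × ℝ → ℝ) (E B : ℝ × ℝ → Fin 3 → ℝ)
    (hγ : 1 < γ)
    (hρpos : ∀ z, 0 < ρ z) (hppos : ∀ z, 0 < p z)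
    (hu : ∀ z, ux z ^ 2 + uy z ^ 2 + uz z ^ 2 < 1)
    (hρc : ContDiff ℝ 1 ρ) (huxc : ContDiff ℝ 1 ux) (huyc : ContDiff ℝ 1 uy)
    (huzc : ContDiff ℝ 1 uz) (hpc : ContDiff ℝ 1 p)
    (hEc : ContDiff ℝ 1 E) (hBc : ContDiff ℝ 1 B)
    (hmass : ∀ z, ptd (fun w => ρ w * Gm3 ux uy uz w) z
      + pxd (fun w => ρ w * Gm3 ux uy uz w * ux w) z = 0)
    (hmomx : ∀ z, ptd (fun w => ρ w * hent γ ρ p w * Gm3 ux uy uz w ^ 2 * ux w) z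
      + pxd (fun w => ρ w * hent γ ρ p w * Gm3 ux uy uz w ^ 2 * ux w * ux w) z
      + pxd p z
      = r * ρ z * Gm3 ux uy uz z * (E z 0 + (uy z * B z 2 - uz z * B z 1)))
    (hmomy : ∀ z, ptd (fun w => ρ w * hent γ ρ p w * Gm3 ux uy uz w ^ 2 * uy w) z
      + pxd (fun w => ρ w * hent γ ρ p w * Gm3 ux uy uz w ^ 2 * ux w * uy w) z
      = r * ρ z * Gm3 ux uy uz z * (E z 1 + (uz z * B z 0 - ux z * B z 2)))
    (hmomz : ∀ z, ptd (fun w => ρ w * hent γ ρ p w * Gm3 ux uy uz w ^ 2 * uz w) z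
      + pxd (fun w => ρ w * hent γ ρ p w * Gm3 ux uy uz w ^ 2 * ux w * uz w) z
      = r * ρ z * Gm3 ux uy uz z * (E z 2 + (ux z * B z 1 - uy z * B z 0)))
    (hener : ∀ z, ptd (fun w => ρ w * hent γ ρ p w * Gm3 ux uy uz w ^ 2 - p w) z
      + pxd (fun w => ρ w * hent γ ρ p w * Gm3 ux uy uz w ^ 2 * ux w) z
      = r * ρ z * Gm3 ux uy uz z * (ux z * E z 0 + uy z * E z 1 + uz z * E z 2)):
    ∀ z, ptd (fun w => Real.log (p w * ρ w ^ (-γ))) z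
      + ux z * pxd (fun w => Real.log (p w * ρ w ^ (-γ))) z = 0 := by
  intro z
  have hγ0 : γ - 1 ≠ 0 := sub_ne_zero.2 (ne_of_gt hγ)
  have dρ : DifferentiableAt ℝ ρ z := (hρc.differentiable one_ne_zero).differentiableAt
  have dux : DifferentiableAt ℝ ux z := (huxc.differentiable one_ne_zero).differentiableAt
  have duy : DifferentiableAt ℝ uy z := (huyc.differentiable one_ne_zero).differentiableAt
  have duz : DifferentiableAt ℝ uz z := (huzc.differentiable one_ne_zero).differentiableAt
  have dp : DifferentiableAt ℝ p z := (hpc.differentiable one_ne_zero).differentiableAt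
  obtain ⟨dG, fG⟩ := Gm3_spec dux duy duz (hu z)
  obtain ⟨dH, fH⟩ := hent_spec dρ dp (hρpos z).ne' hγ0
  have dG2 : DifferentiableAt ℝ (fun w => Gm3 ux uy uz w ^ 2) z := dG.pow 2
  have dρG : DifferentiableAt ℝ (fun w => ρ w * Gm3 ux uy uz w) z := dρ.mul dG
  have dρH : DifferentiableAt ℝ (fun w => ρ w * hent γ ρ p w) z := dρ.mul dH
  have dW : DifferentiableAt ℝ (fun w => ρ w * hent γ ρ p w * Gm3 ux uy uz w ^ 2) z :=
    dρH.mul dG2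
  have dWx : DifferentiableAt ℝ
      (fun w => ρ w * hent γ ρ p w * Gm3 ux uy uz w ^ 2 * ux w) z := dW.mul dux
  -- positivity facts
  have hq : (0:ℝ) ≤ ux z ^ 2 + uy z ^ 2 + uz z ^ 2 := by positivity
  have hY0 : 0 < 1 - (ux z ^ 2 + uy z ^ 2 + uz z ^ 2) := by linarith [hu z]
  have hs0 : 0 < Real.sqrt (1 - (ux z ^ 2 + uy z ^ 2 + uz z ^ 2)) := Real.sqrt_pos.2 hY0
  have hGpos : 0 < Gm3 ux uy uz z := by
    unfold Gm3; positivity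
  have hy' : Gm3 ux uy uz z ^ 2 * (1 - (ux z ^ 2 + uy z ^ 2 + uz z ^ 2)) = 1 := by
    unfold Gm3
    rw [div_pow, one_pow, Real.sq_sqrt hY0.le]
    exact one_div_mul_cancel (ne_of_gt hY0)
  -- rewrite the hypotheses at z
  have Hm := hmass z
  simp only [ptd, pxd, fd_mul (fun w => ρ w * Gm3 ux uy uz w) ux dρG dux,
    fd_mul ρ (Gm3 ux uy uz) dρ dG, fG] at Hm
  have Hmx := hmomx z
  simp only [ptd, pxd,
    fd_mul (fun w => ρ w * hent γ ρ p w * Gm3 ux uy uz w ^ 2 * ux w) ux dWx dux,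
    fd_mul (fun w => ρ w * hent γ ρ p w * Gm3 ux uy uz w ^ 2) ux dW dux,
    fd_mul (fun w => ρ w * hent γ ρ p w) (fun w => Gm3 ux uy uz w ^ 2) dρH dG2,
    fd_mul ρ (hent γ ρ p) dρ dH,
    fd_sq (Gm3 ux uy uz) dG, fG, fH] at Hmx
  have Hmy := hmomy z
  simp only [ptd, pxd,
    fd_mul (fun w => ρ w * hent γ ρ p w * Gm3 ux uy uz w ^ 2 * ux w) uy dWx duy,
    fd_mul (fun w => ρ w * hent γ ρ p w * Gm3 ux uy uz w ^ 2) uy dW duy,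
    fd_mul (fun w => ρ w * hent γ ρ p w * Gm3 ux uy uz w ^ 2) ux dW dux,
    fd_mul (fun w => ρ w * hent γ ρ p w) (fun w => Gm3 ux uy uz w ^ 2) dρH dG2,
    fd_mul ρ (hent γ ρ p) dρ dH,
    fd_sq (Gm3 ux uy uz) dG, fG, fH] at Hmy
  have Hmz := hmomz z
  simp only [ptd, pxd,
    fd_mul (fun w => ρ w * hent γ ρ p w * Gm3 ux uy uz w ^ 2 * ux w) uz dWx duz,
    fd_mul (fun w => ρ w * hent γ ρ p w * Gm3 ux uy uz w ^ 2) uz dW duz,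
    fd_mul (fun w => ρ w * hent γ ρ p w * Gm3 ux uy uz w ^ 2) ux dW dux,
    fd_mul (fun w => ρ w * hent γ ρ p w) (fun w => Gm3 ux uy uz w ^ 2) dρH dG2,
    fd_mul ρ (hent γ ρ p) dρ dH,
    fd_sq (Gm3 ux uy uz) dG, fG, fH] at Hmz
  have He := hener z
  simp only [ptd, pxd,
    fd_sub (fun w => ρ w * hent γ ρ p w * Gm3 ux uy uz w ^ 2) p dW dp,
    fd_mul (fun w => ρ w * hent γ ρ p w * Gm3 ux uy uz w ^ 2) ux dW dux,
    fd_mul (fun w => ρ w * hent γ ρ p w) (fun w => Gm3 ux uy uz w ^ 2) dρH dG2,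
    fd_mul ρ (hent γ ρ p) dρ dH,
    fd_sq (Gm3 ux uy uz) dG, fG, fH] at He
  -- the key algebraic computation
  have hkey := key γ (ρ z) (ux z) (uy z) (uz z) (p z) (Gm3 ux uy uz z) (hent γ ρ p z)
    (fderiv ℝ ρ z (1, 0)) (fderiv ℝ ρ z (0, 1))
    (fderiv ℝ ux z (1, 0)) (fderiv ℝ ux z (0, 1))
    (fderiv ℝ uy z (1, 0)) (fderiv ℝ uy z (0, 1))
    (fderiv ℝ uz z (1, 0)) (fderiv ℝ uz z (0, 1))
    (fderiv ℝ p z (1, 0)) (fderiv ℝ p z (0, 1))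
    _ _ _ _ _ _ _
    (r * ρ z * Gm3 ux uy uz z * (E z 0 + (uy z * B z 2 - uz z * B z 1)))
    (r * ρ z * Gm3 ux uy uz z * (E z 1 + (uz z * B z 0 - ux z * B z 2)))
    (r * ρ z * Gm3 ux uy uz z * (E z 2 + (ux z * B z 1 - uy z * B z 0)))
    (r * ρ z * Gm3 ux uy uz z * (ux z * E z 0 + uy z * E z 1 + uz z * E z 2))
    hγ (hρpos z) hGpos rfl rfl rfl rfl rfl rfl rfl hy'
    (by linear_combination Hm) (by linear_combination Hmx) (by linear_combination Hmy)
    (by linear_combination Hmz) (by linear_combination He) (by ring)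
  -- now compute the entropy derivative
  have hfun : (fun w => Real.log (p w * ρ w ^ (-γ)))
      = fun w => Real.log (p w) - γ * Real.log (ρ w) := funext fun w => by
    rw [Real.log_mul (hppos w).ne' (Real.rpow_pos_of_pos (hρpos w) _).ne',
      Real.log_rpow (hρpos w)]
    ring
  have hL : HasFDerivAt (fun w => Real.log (p w) - γ * Real.log (ρ w))
      (((p z)⁻¹ • fderiv ℝ p z) - γ • ((ρ z)⁻¹ • fderiv ℝ ρ z)) z :=
    (dp.hasFDerivAt.log (hppos z).ne').sub ((dρ.hasFDerivAt.log (hρpos z).ne').const_mul γ)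
  rw [ptd, pxd, hfun, hL.fderiv]
  simp only [ContinuousLinearMap.sub_apply, ContinuousLinearMap.smul_apply, smul_eq_mul]
  have ha0 : ρ z ≠ 0 := (hρpos z).ne'
  have hP0 : p z ≠ 0 := (hppos z).ne'
  field_simp at hkey ⊢
  linear_combination hkey
end
end

section
/- Let γ > 1 and let (ρ, u_x, u_y, u_z, p, E, B) be a smooth solution of the 1-D relativistic fluid equations with Lorentz-force source. Set s_M = rΓρ(E + u×B) ∈ ℝ³ and s_ℰ = rΓρ(u·E) ∈ ℝ. Then at every point of ℝ × ℝ the following identity holds: (1/Γ²) ∂_t p = ∂_t p + u_x ∂_x p + (ρh/Γ)(∂_t Γ + ∂_x(Γ u_x)) − ρh ∂_x u_x − u · (s_M − s_ℰ u), where · is the dot product on ℝ³. -/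
noncomputable section

lemma fderiv_mul_apply' {f g : ℝ × ℝ → ℝ} {z : ℝ × ℝ}
    (hf : DifferentiableAt ℝ f z) (hg : DifferentiableAt ℝ g z) (v : ℝ × ℝ) :
    fderiv ℝ (fun w => f w * g w) z v
      = fderiv ℝ f z v * g z + f z * fderiv ℝ g z v := by
  rw [fderiv_fun_mul hf hg]
  simp [ContinuousLinearMap.add_apply, ContinuousLinearMap.smul_apply, smul_eq_mul]
  ring

lemma hasFDerivAt_sq' {f : ℝ × ℝ → ℝ} {z : ℝ × ℝ} (hf : DifferentiableAt ℝ f z) :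
    HasFDerivAt (fun w => f w ^ 2) ((2 * f z) • fderiv ℝ f z) z := by
  have h := hf.hasFDerivAt.mul hf.hasFDerivAt
  have hfun : (fun w => f w ^ 2) = fun w => f w * f w := by funext w; ring
  rw [hfun]
  exact h.congr_fderiv (by rw [two_mul, add_smul])

lemma gm3_hasFDerivAt (ux uy uz : ℝ × ℝ → ℝ) (z : ℝ × ℝ)
    (hx : DifferentiableAt ℝ ux z) (hy : DifferentiableAt ℝ uy z)
    (hz : DifferentiableAt ℝ uz z) (h1 : ux z ^ 2 + uy z ^ 2 + uz z ^ 2 < 1) :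
    HasFDerivAt (Gm3 ux uy uz)
      ((Gm3 ux uy uz z ^ 3) • (ux z • fderiv ℝ ux z + uy z • fderiv ℝ uy z
        + uz z • fderiv ℝ uz z)) z := by
  set S : ℝ × ℝ → ℝ := fun w => 1 - (ux w ^ 2 + uy w ^ 2 + uz w ^ 2) with hSdef
  have hSz : 0 < S z := by simp only [hSdef]; linarith
  have hsq : 0 < Real.sqrt (S z) := Real.sqrt_pos.2 hSz
  have hS' : HasFDerivAt S
      (-(((2 * ux z) • fderiv ℝ ux z + (2 * uy z) • fderiv ℝ uy z)
        + (2 * uz z) • fderiv ℝ uz z)) z :=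
    (((hasFDerivAt_sq' hx).add (hasFDerivAt_sq' hy)).add (hasFDerivAt_sq' hz)).const_sub 1
  have hg : HasDerivAt (fun y : ℝ => (Real.sqrt y)⁻¹)
      (-(Real.sqrt (S z) ^ 2)⁻¹ * (1 / (2 * Real.sqrt (S z)))) (S z) := by
    have := (hasDerivAt_inv hsq.ne').comp (S z) (Real.hasDerivAt_sqrt hSz.ne')
    exact this
  have hcomp := hg.comp_hasFDerivAt z hS'
  have hfun : Gm3 ux uy uz = (fun y : ℝ => (Real.sqrt y)⁻¹) ∘ S := by
    funext w; simp [Gm3, hSdef, one_div, Function.comp]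
  rw [hfun]
  refine hcomp.congr_fderiv (Eq.symm ?_)
  have hGval : Gm3 ux uy uz z = (Real.sqrt (S z))⁻¹ := by
    simp [Gm3, hSdef, one_div]
  apply ContinuousLinearMap.ext
  intro v
  simp only [ContinuousLinearMap.smul_apply, ContinuousLinearMap.add_apply,
    ContinuousLinearMap.neg_apply, smul_eq_mul, hGval, Function.comp_apply]
  have ht : Real.sqrt (S z) ≠ 0 := hsq.ne'
  have hs2 : Real.sqrt (S z) ^ 2 = S z := Real.sq_sqrt hSz.le
  field_simp

theorem pressure_identity_lemma1
    (γ r : ℝ) (ρ ux uy uz p : ℝ × ℝ → ℝ) (E B : ℝ × ℝ → Fin 3 → ℝ)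
    (hγ : 1 < γ)
    (hρpos : ∀ z, 0 < ρ z) (hppos : ∀ z, 0 < p z)
    (hu : ∀ z, ux z ^ 2 + uy z ^ 2 + uz z ^ 2 < 1)
    (hρc : ContDiff ℝ 1 ρ) (huxc : ContDiff ℝ 1 ux) (huyc : ContDiff ℝ 1 uy)
    (huzc : ContDiff ℝ 1 uz) (hpc : ContDiff ℝ 1 p)
    (hEc : ContDiff ℝ 1 E) (hBc : ContDiff ℝ 1 B)
    (hmass : ∀ z, ptd (fun w => ρ w * Gm3 ux uy uz w) z
      + pxd (fun w => ρ w * Gm3 ux uy uz w * ux w) z = 0)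
    (hmomx : ∀ z, ptd (fun w => ρ w * hent γ ρ p w * Gm3 ux uy uz w ^ 2 * ux w) z
      + pxd (fun w => ρ w * hent γ ρ p w * Gm3 ux uy uz w ^ 2 * ux w * ux w) z
      + pxd p z
      = r * ρ z * Gm3 ux uy uz z * (E z 0 + (uy z * B z 2 - uz z * B z 1)))
    (hmomy : ∀ z, ptd (fun w => ρ w * hent γ ρ p w * Gm3 ux uy uz w ^ 2 * uy w) z
      + pxd (fun w => ρ w * hent γ ρ p w * Gm3 ux uy uz w ^ 2 * ux w * uy w) z
      = r * ρ z * Gm3 ux uy uz z * (E z 1 + (uz z * B z 0 - ux z * B z 2)))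
    (hmomz : ∀ z, ptd (fun w => ρ w * hent γ ρ p w * Gm3 ux uy uz w ^ 2 * uz w) z
      + pxd (fun w => ρ w * hent γ ρ p w * Gm3 ux uy uz w ^ 2 * ux w * uz w) z
      = r * ρ z * Gm3 ux uy uz z * (E z 2 + (ux z * B z 1 - uy z * B z 0)))
    (hener : ∀ z, ptd (fun w => ρ w * hent γ ρ p w * Gm3 ux uy uz w ^ 2 - p w) z
      + pxd (fun w => ρ w * hent γ ρ p w * Gm3 ux uy uz w ^ 2 * ux w) z
      = r * ρ z * Gm3 ux uy uz z * (ux z * E z 0 + uy z * E z 1 + uz z * E z 2)):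
    ∀ z, (1 / Gm3 ux uy uz z ^ 2) * ptd p z
      = ptd p z + ux z * pxd p z
        + (ρ z * hent γ ρ p z / Gm3 ux uy uz z)
          * (ptd (fun w => Gm3 ux uy uz w) z + pxd (fun w => Gm3 ux uy uz w * ux w) z)
        - ρ z * hent γ ρ p z * pxd ux z
        - (ux z * (r * ρ z * Gm3 ux uy uz z * (E z 0 + (uy z * B z 2 - uz z * B z 1))
              - r * ρ z * Gm3 ux uy uz z * (ux z * E z 0 + uy z * E z 1 + uz z * E z 2) * ux z)
          + uy z * (r * ρ z * Gm3 ux uy uz z * (E z 1 + (uz z * B z 0 - ux z * B z 2))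
              - r * ρ z * Gm3 ux uy uz z * (ux z * E z 0 + uy z * E z 1 + uz z * E z 2) * uy z)
          + uz z * (r * ρ z * Gm3 ux uy uz z * (E z 2 + (ux z * B z 1 - uy z * B z 0))
              - r * ρ z * Gm3 ux uy uz z * (ux z * E z 0 + uy z * E z 1 + uz z * E z 2) * uz z)) := by
  intro z
  have hρd : DifferentiableAt ℝ ρ z := hρc.differentiable one_ne_zero z
  have huxd : DifferentiableAt ℝ ux z := huxc.differentiable one_ne_zero z
  have huyd : DifferentiableAt ℝ uy z := huyc.differentiable one_ne_zero z
  have huzd : DifferentiableAt ℝ uz z := huzc.differentiable one_ne_zero z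
  have hpd : DifferentiableAt ℝ p z := hpc.differentiable one_ne_zero z
  have hGfd := gm3_hasFDerivAt ux uy uz z huxd huyd huzd (hu z)
  have hGd : DifferentiableAt ℝ (Gm3 ux uy uz) z := hGfd.differentiableAt
  have hhd : DifferentiableAt ℝ (hent γ ρ p) z := by
    have hq : DifferentiableAt ℝ (fun w => p w / ρ w) z := by
      have h2 : (fun w => p w / ρ w) = fun w => p w * (ρ w)⁻¹ := by
        funext w; rw [div_eq_mul_inv]
      rw [h2]
      exact hpd.mul (hρd.inv (hρpos z).ne')
    have h1 : hent γ ρ p = fun w => 1 + γ / (γ - 1) * (p w / ρ w) := rfl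
    rw [h1]
    exact (differentiableAt_const _).add ((differentiableAt_const _).mul hq)
  have hDd : DifferentiableAt ℝ (fun w => ρ w * hent γ ρ p w * Gm3 ux uy uz w ^ 2) z :=
    (hρd.mul hhd).mul (hGd.pow 2)
  have hDuxd : DifferentiableAt ℝ
      (fun w => ρ w * hent γ ρ p w * Gm3 ux uy uz w ^ 2 * ux w) z := hDd.mul huxd
  have eG : ∀ v : ℝ × ℝ, fderiv ℝ (fun w => Gm3 ux uy uz w) z v
      = Gm3 ux uy uz z ^ 3 * (ux z * fderiv ℝ ux z v + uy z * fderiv ℝ uy z v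
        + uz z * fderiv ℝ uz z v) := by
    intro v
    have h2 : HasFDerivAt (fun w => Gm3 ux uy uz w)
        ((Gm3 ux uy uz z ^ 3) • (ux z • fderiv ℝ ux z + uy z • fderiv ℝ uy z
          + uz z • fderiv ℝ uz z)) z := hGfd
    rw [h2.fderiv]
    simp only [ContinuousLinearMap.smul_apply, ContinuousLinearMap.add_apply, smul_eq_mul]
  have eDux : ∀ v, fderiv ℝ (fun w => ρ w * hent γ ρ p w * Gm3 ux uy uz w ^ 2 * ux w) z v
      = fderiv ℝ (fun w => ρ w * hent γ ρ p w * Gm3 ux uy uz w ^ 2) z v * ux z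
        + ρ z * hent γ ρ p z * Gm3 ux uy uz z ^ 2 * fderiv ℝ ux z v :=
    fun v => fderiv_mul_apply' hDd huxd v
  have eDuy : ∀ v, fderiv ℝ (fun w => ρ w * hent γ ρ p w * Gm3 ux uy uz w ^ 2 * uy w) z v
      = fderiv ℝ (fun w => ρ w * hent γ ρ p w * Gm3 ux uy uz w ^ 2) z v * uy z
        + ρ z * hent γ ρ p z * Gm3 ux uy uz z ^ 2 * fderiv ℝ uy z v :=
    fun v => fderiv_mul_apply' hDd huyd v
  have eDuz : ∀ v, fderiv ℝ (fun w => ρ w * hent γ ρ p w * Gm3 ux uy uz w ^ 2 * uz w) z v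
      = fderiv ℝ (fun w => ρ w * hent γ ρ p w * Gm3 ux uy uz w ^ 2) z v * uz z
        + ρ z * hent γ ρ p z * Gm3 ux uy uz z ^ 2 * fderiv ℝ uz z v :=
    fun v => fderiv_mul_apply' hDd huzd v
  have eDuxux : ∀ v, fderiv ℝ
      (fun w => ρ w * hent γ ρ p w * Gm3 ux uy uz w ^ 2 * ux w * ux w) z v
      = fderiv ℝ (fun w => ρ w * hent γ ρ p w * Gm3 ux uy uz w ^ 2 * ux w) z v * ux z
        + ρ z * hent γ ρ p z * Gm3 ux uy uz z ^ 2 * ux z * fderiv ℝ ux z v :=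
    fun v => fderiv_mul_apply' hDuxd huxd v
  have eDuxuy : ∀ v, fderiv ℝ
      (fun w => ρ w * hent γ ρ p w * Gm3 ux uy uz w ^ 2 * ux w * uy w) z v
      = fderiv ℝ (fun w => ρ w * hent γ ρ p w * Gm3 ux uy uz w ^ 2 * ux w) z v * uy z
        + ρ z * hent γ ρ p z * Gm3 ux uy uz z ^ 2 * ux z * fderiv ℝ uy z v :=
    fun v => fderiv_mul_apply' hDuxd huyd v
  have eDuxuz : ∀ v, fderiv ℝ
      (fun w => ρ w * hent γ ρ p w * Gm3 ux uy uz w ^ 2 * ux w * uz w) z v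
      = fderiv ℝ (fun w => ρ w * hent γ ρ p w * Gm3 ux uy uz w ^ 2 * ux w) z v * uz z
        + ρ z * hent γ ρ p z * Gm3 ux uy uz z ^ 2 * ux z * fderiv ℝ uz z v :=
    fun v => fderiv_mul_apply' hDuxd huzd v
  have eDmp : ∀ v, fderiv ℝ
      (fun w => ρ w * hent γ ρ p w * Gm3 ux uy uz w ^ 2 - p w) z v
      = fderiv ℝ (fun w => ρ w * hent γ ρ p w * Gm3 ux uy uz w ^ 2) z v
        - fderiv ℝ p z v := by
    intro v
    rw [fderiv_fun_sub hDd hpd]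
    simp
  have eGux : ∀ v, fderiv ℝ (fun w => Gm3 ux uy uz w * ux w) z v
      = fderiv ℝ (fun w => Gm3 ux uy uz w) z v * ux z
        + Gm3 ux uy uz z * fderiv ℝ ux z v :=
    fun v => fderiv_mul_apply' hGd huxd v
  have Hx := hmomx z
  have Hy := hmomy z
  have Hz := hmomz z
  have He := hener z
  simp only [ptd, pxd] at Hx Hy Hz He ⊢
  rw [eDux, eDuxux, eDux] at Hx
  rw [eDuy, eDuxuy, eDux] at Hy
  rw [eDuz, eDuxuz, eDux] at Hz
  rw [eDmp, eDux] at He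
  rw [eG, eGux, eG]
  have hs : (0:ℝ) < 1 - (ux z ^ 2 + uy z ^ 2 + uz z ^ 2) := by linarith [hu z]
  have hGval : Gm3 ux uy uz z
      = 1 / Real.sqrt (1 - (ux z ^ 2 + uy z ^ 2 + uz z ^ 2)) := rfl
  have hGpos : 0 < Gm3 ux uy uz z := by
    rw [hGval]
    positivity
  have hG2 : Gm3 ux uy uz z ^ 2 * (1 - (ux z ^ 2 + uy z ^ 2 + uz z ^ 2)) = 1 := by
    rw [hGval, div_pow, one_pow, Real.sq_sqrt hs.le]
    field_simp
  have hGne : Gm3 ux uy uz z ≠ 0 := hGpos.ne'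
  have e1 : 1 / Gm3 ux uy uz z ^ 2 = 1 - (ux z ^ 2 + uy z ^ 2 + uz z ^ 2) := by
    rw [div_eq_iff (pow_ne_zero 2 hGne)]
    linear_combination -hG2
  have e2 : ρ z * hent γ ρ p z / Gm3 ux uy uz z
      = ρ z * hent γ ρ p z * Gm3 ux uy uz z * (1 - (ux z ^ 2 + uy z ^ 2 + uz z ^ 2)) := by
    rw [div_eq_iff hGne]
    linear_combination (-(ρ z * hent γ ρ p z)) * hG2
  rw [e1, e2]
  linear_combination (-(ux z)) * Hx + (-(uy z)) * Hy + (-(uz z)) * Hz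
    + (ux z ^ 2 + uy z ^ 2 + uz z ^ 2) * He
    + (-(ρ z * hent γ ρ p z * Gm3 ux uy uz z ^ 2
        * ((ux z * fderiv ℝ ux z (1,0) + uy z * fderiv ℝ uy z (1,0) + uz z * fderiv ℝ uz z (1,0))
          + ux z * (ux z * fderiv ℝ ux z (0,1) + uy z * fderiv ℝ uy z (0,1) + uz z * fderiv ℝ uz z (0,1)))
      + ρ z * hent γ ρ p z * fderiv ℝ ux z (0,1))) * hG2
end
end

section
/- Let γ > 1 and let W_L, W_R be two primitive states with ρ_L ≠ ρ_R and β_L ≠ β_R, where β = ρ/p. Then, with m_k = Γ u_k and k_coef = 1/((γ−1) β^ln) + 1, the jump of the entropy variables satisfies componentwise: [[V₁]] = [[ρ]]/ρ^ln + k_coef [[β]]; [[V₂]] = m̄_x [[β]] + β̄ [[m_x]]; [[V₃]] = m̄_y [[β]] + β̄ [[m_y]]; [[V₄]] = m̄_z [[β]] + β̄ [[m_z]]; [[V₅]] = −Γ̄ [[β]] − (β̄/Γ̄)(m̄_x [[m_x]] + m̄_y [[m_y]] + m̄_z [[m_z]]). -/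
noncomputable section

set_option maxHeartbeats 1000000 in
/-- Componentwise jump identities for the entropy variables:
`[[V₁]] = [[ρ]]/ρ^ln + k_coef [[β]]`, `[[V₂]] = m̄_x [[β]] + β̄ [[m_x]]`,
`[[V₃]] = m̄_y [[β]] + β̄ [[m_y]]`, `[[V₄]] = m̄_z [[β]] + β̄ [[m_z]]`,
`[[V₅]] = −Γ̄ [[β]] − (β̄/Γ̄)(m̄_x [[m_x]] + m̄_y [[m_y]] + m̄_z [[m_z]])`. -/
theorem entropy_variables_jump
    (γ ρL uxL uyL uzL pL ρR uxR uyR uzR pR : ℝ)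
    (hγ : 1 < γ)
    (hρL : 0 < ρL) (hpL : 0 < pL) (huL : uxL ^ 2 + uyL ^ 2 + uzL ^ 2 < 1)
    (hρR : 0 < ρR) (hpR : 0 < pR) (huR : uxR ^ 2 + uyR ^ 2 + uzR ^ 2 < 1)
    (hρne : ρL ≠ ρR) (hβne : ρL / pL ≠ ρR / pR) :
    let ΓL := 1 / Real.sqrt (1 - (uxL ^ 2 + uyL ^ 2 + uzL ^ 2))
    let ΓR := 1 / Real.sqrt (1 - (uxR ^ 2 + uyR ^ 2 + uzR ^ 2))
    let βL := ρL / pL; let βR := ρR / pR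
    let sL := Real.log (pL * ρL ^ (-γ)); let sR := Real.log (pR * ρR ^ (-γ))
    let mxL := ΓL * uxL; let myL := ΓL * uyL; let mzL := ΓL * uzL
    let mxR := ΓR * uxR; let myR := ΓR * uyR; let mzR := ΓR * uzR
    let VL : Fin 5 → ℝ :=
      ![(γ - sL) / (γ - 1) + βL, uxL * ΓL * βL, uyL * ΓL * βL, uzL * ΓL * βL, -(ΓL * βL)]
    let VR : Fin 5 → ℝ :=
      ![(γ - sR) / (γ - 1) + βR, uxR * ΓR * βR, uyR * ΓR * βR, uzR * ΓR * βR, -(ΓR * βR)]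
    let ρln := (ρR - ρL) / (Real.log ρR - Real.log ρL)
    let βln := (βR - βL) / (Real.log βR - Real.log βL)
    let kcoef := 1 / ((γ - 1) * βln) + 1
    let Γb := (ΓL + ΓR) / 2; let βb := (βL + βR) / 2
    let mxb := (mxL + mxR) / 2; let myb := (myL + myR) / 2; let mzb := (mzL + mzR) / 2
    (VR 0 - VL 0 = (ρR - ρL) / ρln + kcoef * (βR - βL)) ∧
    (VR 1 - VL 1 = mxb * (βR - βL) + βb * (mxR - mxL)) ∧
    (VR 2 - VL 2 = myb * (βR - βL) + βb * (myR - myL)) ∧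
    (VR 3 - VL 3 = mzb * (βR - βL) + βb * (mzR - mzL)) ∧
    (VR 4 - VL 4 = -(Γb * (βR - βL))
      - (βb / Γb) * (mxb * (mxR - mxL) + myb * (myR - myL) + mzb * (mzR - mzL))) := by

  have h1L : 0 < 1 - (uxL ^ 2 + uyL ^ 2 + uzL ^ 2) := by linarith
  have h1R : 0 < 1 - (uxR ^ 2 + uyR ^ 2 + uzR ^ 2) := by linarith
  have hsL : 0 < Real.sqrt (1 - (uxL ^ 2 + uyL ^ 2 + uzL ^ 2)) := Real.sqrt_pos.mpr h1L
  have hsR : 0 < Real.sqrt (1 - (uxR ^ 2 + uyR ^ 2 + uzR ^ 2)) := Real.sqrt_pos.mpr h1R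
  have hsqL : Real.sqrt (1 - (uxL ^ 2 + uyL ^ 2 + uzL ^ 2)) ^ 2 = 1 - (uxL ^ 2 + uyL ^ 2 + uzL ^ 2) :=
    Real.sq_sqrt h1L.le
  have hsqR : Real.sqrt (1 - (uxR ^ 2 + uyR ^ 2 + uzR ^ 2)) ^ 2 = 1 - (uxR ^ 2 + uyR ^ 2 + uzR ^ 2) :=
    Real.sq_sqrt h1R.le
  intro ΓL ΓR βL βR sL sR mxL myL mzL mxR myR mzR VL VR ρln βln kcoef Γb βb mxb myb mzb
  have hΓL : 0 < ΓL := by positivity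
  have hΓR : 0 < ΓR := by positivity
  have hΓL2 : ΓL ^ 2 * (1 - (uxL ^ 2 + uyL ^ 2 + uzL ^ 2)) = 1 := by
    show (1 / Real.sqrt (1 - (uxL ^ 2 + uyL ^ 2 + uzL ^ 2))) ^ 2 * _ = 1
    rw [div_pow, one_pow, hsqL]
    field_simp
  have hΓR2 : ΓR ^ 2 * (1 - (uxR ^ 2 + uyR ^ 2 + uzR ^ 2)) = 1 := by
    show (1 / Real.sqrt (1 - (uxR ^ 2 + uyR ^ 2 + uzR ^ 2))) ^ 2 * _ = 1
    rw [div_pow, one_pow, hsqR]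
    field_simp
  have hmL : mxL ^ 2 + myL ^ 2 + mzL ^ 2 = ΓL ^ 2 - 1 := by
    show (ΓL * uxL) ^ 2 + (ΓL * uyL) ^ 2 + (ΓL * uzL) ^ 2 = ΓL ^ 2 - 1
    nlinarith [hΓL2]
  have hmR : mxR ^ 2 + myR ^ 2 + mzR ^ 2 = ΓR ^ 2 - 1 := by
    show (ΓR * uxR) ^ 2 + (ΓR * uyR) ^ 2 + (ΓR * uzR) ^ 2 = ΓR ^ 2 - 1
    nlinarith [hΓR2]
  have hβL : 0 < βL := div_pos hρL hpL
  have hβR : 0 < βR := div_pos hρR hpR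
  have hlnρ : Real.log ρR - Real.log ρL ≠ 0 := by
    intro h
    exact hρne (Real.log_injOn_pos (Set.mem_Ioi.mpr hρL) (Set.mem_Ioi.mpr hρR) (by linarith))
  have hlnβ : Real.log βR - Real.log βL ≠ 0 := by
    intro h
    exact hβne (Real.log_injOn_pos (Set.mem_Ioi.mpr hβL) (Set.mem_Ioi.mpr hβR) (by linarith))
  have hsLe : sL = Real.log pL - γ * Real.log ρL := by
    show Real.log (pL * ρL ^ (-γ)) = _
    rw [Real.log_mul (ne_of_gt hpL) (ne_of_gt (Real.rpow_pos_of_pos hρL _)),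
      Real.log_rpow hρL]
    ring
  have hsRe : sR = Real.log pR - γ * Real.log ρR := by
    show Real.log (pR * ρR ^ (-γ)) = _
    rw [Real.log_mul (ne_of_gt hpR) (ne_of_gt (Real.rpow_pos_of_pos hρR _)),
      Real.log_rpow hρR]
    ring
  have hlβL : Real.log βL = Real.log ρL - Real.log pL := Real.log_div (ne_of_gt hρL) (ne_of_gt hpL)
  have hlβR : Real.log βR = Real.log ρR - Real.log pR := Real.log_div (ne_of_gt hρR) (ne_of_gt hpR)
  have hγ1 : γ - 1 ≠ 0 := by linarith
  have hρd : ρR - ρL ≠ 0 := sub_ne_zero.mpr (Ne.symm hρne)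
  have hβd : βR - βL ≠ 0 := sub_ne_zero.mpr (Ne.symm hβne)
  refine ⟨?_, ?_, ?_, ?_, ?_⟩
  · show ((γ - sR) / (γ - 1) + βR) - ((γ - sL) / (γ - 1) + βL)
      = (ρR - ρL) / ρln + kcoef * (βR - βL)
    have hρkey : (ρR - ρL) / ρln = Real.log ρR - Real.log ρL := by
      show (ρR - ρL) / ((ρR - ρL) / (Real.log ρR - Real.log ρL)) = _
      rw [div_div_eq_mul_div, mul_comm, mul_div_assoc, div_self hρd, mul_one]
    have hkkey : kcoef * (βR - βL)
        = (Real.log βR - Real.log βL) / (γ - 1) + (βR - βL) := by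
      show (1 / ((γ - 1) * ((βR - βL) / (Real.log βR - Real.log βL))) + 1) * (βR - βL) = _
      rw [add_mul, one_mul]
      congr 1
      field_simp
    rw [hρkey, hkkey, hsLe, hsRe, hlβL, hlβR]
    field_simp
    ring
  · show uxR * ΓR * βR - uxL * ΓL * βL = mxb * (βR - βL) + βb * (mxR - mxL)
    show uxR * ΓR * βR - uxL * ΓL * βL
      = (ΓL * uxL + ΓR * uxR) / 2 * (βR - βL) + (βL + βR) / 2 * (ΓR * uxR - ΓL * uxL)
    ring
  · show uyR * ΓR * βR - uyL * ΓL * βL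
      = (ΓL * uyL + ΓR * uyR) / 2 * (βR - βL) + (βL + βR) / 2 * (ΓR * uyR - ΓL * uyL)
    ring
  · show uzR * ΓR * βR - uzL * ΓL * βL
      = (ΓL * uzL + ΓR * uzR) / 2 * (βR - βL) + (βL + βR) / 2 * (ΓR * uzR - ΓL * uzL)
    ring
  · show -(ΓR * βR) - -(ΓL * βL) = -(Γb * (βR - βL))
      - (βb / Γb) * (mxb * (mxR - mxL) + myb * (myR - myL) + mzb * (mzR - mzL))
    have hsum : mxb * (mxR - mxL) + myb * (myR - myL) + mzb * (mzR - mzL)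
        = Γb * (ΓR - ΓL) := by
      show (mxL + mxR) / 2 * (mxR - mxL) + (myL + myR) / 2 * (myR - myL)
        + (mzL + mzR) / 2 * (mzR - mzL) = (ΓL + ΓR) / 2 * (ΓR - ΓL)
      nlinarith [hmL, hmR]
    have hΓb : Γb ≠ 0 := by show (ΓL + ΓR) / 2 ≠ 0; positivity
    have hred : βb / Γb * (Γb * (ΓR - ΓL)) = βb * (ΓR - ΓL) := by
      rw [div_mul_eq_mul_div, mul_comm Γb (ΓR - ΓL), ← mul_assoc, mul_div_assoc,
        div_self hΓb, mul_one]
    rw [hsum, hred]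
    show -(ΓR * βR) - -(ΓL * βL)
      = -((ΓL + ΓR) / 2 * (βR - βL)) - (βL + βR) / 2 * (ΓR - ΓL)
    ring
end
end

section
/- Let u_L, u_R ∈ ℝ³ satisfy |u_L|² < 1 and |u_R|² < 1, and set Γ_σ = 1/√(1 − |u_σ|²) and m_σ = Γ_σ u_σ for σ ∈ {L, R}. Then Γ̄² > m̄_x² + m̄_y² + m̄_z², where ā = (a_L + a_R)/2. (In particular the denominator m̄_x² + m̄_y² + m̄_z² − Γ̄² appearing in the entropy conservative numerical flux is strictly negative, so the flux is well defined.) -/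
set_option maxHeartbeats 1000000

noncomputable section

/-- For two admissible velocities, `Γ̄² > m̄_x² + m̄_y² + m̄_z²`; in particular the
denominator `m̄_x² + m̄_y² + m̄_z² − Γ̄²` in the entropy conservative numerical flux
is strictly negative, so the flux is well defined. -/
theorem mean_lorentz_dominates_mean_momenta
    (uxL uyL uzL uxR uyR uzR : ℝ)
    (hL : uxL ^ 2 + uyL ^ 2 + uzL ^ 2 < 1)
    (hR : uxR ^ 2 + uyR ^ 2 + uzR ^ 2 < 1) :
    let ΓL := 1 / Real.sqrt (1 - (uxL ^ 2 + uyL ^ 2 + uzL ^ 2))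
    let ΓR := 1 / Real.sqrt (1 - (uxR ^ 2 + uyR ^ 2 + uzR ^ 2))
    let mxL := ΓL * uxL; let myL := ΓL * uyL; let mzL := ΓL * uzL
    let mxR := ΓR * uxR; let myR := ΓR * uyR; let mzR := ΓR * uzR
    ((ΓL + ΓR) / 2) ^ 2 >
      ((mxL + mxR) / 2) ^ 2 + ((myL + myR) / 2) ^ 2 + ((mzL + mzR) / 2) ^ 2 := by
  intro ΓL ΓR mxL myL mzL mxR myR mzR
  have hsL : (0:ℝ) < 1 - (uxL ^ 2 + uyL ^ 2 + uzL ^ 2) := by linarith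
  have hsR : (0:ℝ) < 1 - (uxR ^ 2 + uyR ^ 2 + uzR ^ 2) := by linarith
  have hqL : Real.sqrt (1 - (uxL ^ 2 + uyL ^ 2 + uzL ^ 2)) > 0 := Real.sqrt_pos.mpr hsL
  have hqR : Real.sqrt (1 - (uxR ^ 2 + uyR ^ 2 + uzR ^ 2)) > 0 := Real.sqrt_pos.mpr hsR
  have hΓLpos : 0 < ΓL := by positivity
  have hΓRpos : 0 < ΓR := by positivity
  have hΓL2 : ΓL ^ 2 * (1 - (uxL ^ 2 + uyL ^ 2 + uzL ^ 2)) = 1 := by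
    show (1 / Real.sqrt _) ^ 2 * _ = 1
    rw [div_pow, one_pow, Real.sq_sqrt hsL.le]
    field_simp
  have hΓR2 : ΓR ^ 2 * (1 - (uxR ^ 2 + uyR ^ 2 + uzR ^ 2)) = 1 := by
    show (1 / Real.sqrt _) ^ 2 * _ = 1
    rw [div_pow, one_pow, Real.sq_sqrt hsR.le]
    field_simp
  -- Γ² = 1 + |m|²
  have hL1 : ΓL ^ 2 = 1 + (mxL ^ 2 + myL ^ 2 + mzL ^ 2) := by
    simp only [mxL, myL, mzL]; nlinarith [hΓL2]
  have hR1 : ΓR ^ 2 = 1 + (mxR ^ 2 + myR ^ 2 + mzR ^ 2) := by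
    simp only [mxR, myR, mzR]; nlinarith [hΓR2]
  clear_value ΓL ΓR mxL myL mzL mxR myR mzR
  -- Cauchy–Schwarz-type bound: ΓL*ΓR ≥ 1 + mL·mR
  have key : ΓL * ΓR ≥ 1 + (mxL * mxR + myL * myR + mzL * mzR) := by
    nlinarith [sq_nonneg (mxL * myR - myL * mxR), sq_nonneg (mxL * mzR - mzL * mxR),
      sq_nonneg (myL * mzR - mzL * myR), sq_nonneg (mxL - mxR), sq_nonneg (myL - myR),
      sq_nonneg (mzL - mzR), mul_pos hΓLpos hΓRpos,
      sq_nonneg (ΓL * ΓR - 1 - (mxL * mxR + myL * myR + mzL * mzR))]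
  nlinarith [key, hL1, hR1]
end
end

section
/- Let γ > 1 and let W_L, W_R be two primitive states with ρ_L ≠ ρ_R and β_L ≠ β_R, where β = ρ/p. Then the entropy conservative numerical flux F̃^x(W_L, W_R) satisfies Tadmor's condition [[V]] · F̃^x(W_L, W_R) = [[ψ^x]], where ψ^x = ρ Γ u_x is the entropy potential, [[a]] = a_R − a_L, and · is the dot product on ℝ⁵. -/
noncomputable section

private lemma denom_neg (gL gR mxL myL mzL mxR myR mzR : ℝ)
    (hGL0 : 0 < gL) (hGR0 : 0 < gR)
    (hGL : gL^2 = mxL^2 + myL^2 + mzL^2 + 1)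
    (hGR : gR^2 = mxR^2 + myR^2 + mzR^2 + 1) :
    ((mxL+mxR)/2)^2 + ((myL+myR)/2)^2 + ((mzL+mzR)/2)^2 - ((gL+gR)/2)^2 < 0 := by
  have hcs : (mxL*mxR+myL*myR+mzL*mzR)^2 ≤ (mxL^2+myL^2+mzL^2)*(mxR^2+myR^2+mzR^2) := by
    nlinarith [sq_nonneg (mxL*myR - myL*mxR), sq_nonneg (mxL*mzR - mzL*mxR),
      sq_nonneg (myL*mzR - mzL*myR)]
  have h2 : ((mxL*mxR+myL*myR+mzL*mzR)+1)^2 ≤ (gL*gR)^2 := by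
    nlinarith [sq_nonneg (mxL-mxR), sq_nonneg (myL-myR), sq_nonneg (mzL-mzR)]
  have h3 : (mxL*mxR+myL*myR+mzL*mzR) + 1 ≤ gL*gR := by
    nlinarith [mul_pos hGL0 hGR0]
  nlinarith [h3]

set_option maxHeartbeats 1000000 in
private lemma key_s12 (γ ρL ρR βL βR gL gR mxL myL mzL mxR myR mzR lρ lβ sL sR
    ρln βln kcoef Gb βb ρb mxb myb mzb D M F5 : ℝ)
    (hγ : γ - 1 ≠ 0) (hlρ : lρ ≠ 0) (hlβ : lβ ≠ 0) (hβd : βR - βL ≠ 0)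
    (hβL : 0 < βL) (hβR : 0 < βR) (hGL0 : 0 < gL) (hGR0 : 0 < gR)
    (hGL : gL^2 = mxL^2 + myL^2 + mzL^2 + 1)
    (hGR : gR^2 = mxR^2 + myR^2 + mzR^2 + 1)
    (hs : sR - sL = (1-γ)*lρ - lβ)
    (hρln : ρln = (ρR - ρL)/lρ) (hβln : βln = (βR - βL)/lβ)
    (hkcoef : kcoef = 1/((γ-1)*βln) + 1)
    (hGb : Gb = (gL+gR)/2) (hβb : βb = (βL+βR)/2) (hρb : ρb = (ρL+ρR)/2)
    (hmxb : mxb = (mxL+mxR)/2) (hmyb : myb = (myL+myR)/2) (hmzb : mzb = (mzL+mzR)/2)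
    (hD : D = mxb^2 + myb^2 + mzb^2 - Gb^2)
    (hM : M = kcoef * ρln * mxb + mxb * ρb / βb)
    (hF5 : F5 = -Gb * (kcoef * ρln * mxb + mxb * ρb / βb) / D) :
    ((γ - sR)/(γ-1) + βR - ((γ - sL)/(γ-1) + βL)) * (ρln * mxb)
    + (mxR*βR - mxL*βL) * (mxb * F5 / Gb + ρb / βb)
    + (myR*βR - myL*βL) * (myb * F5 / Gb)
    + (mzR*βR - mzL*βL) * (mzb * F5 / Gb)
    + (-(gR*βR) - -(gL*βL)) * F5
    = ρR * mxR - ρL * mxL := by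
  have hGb0 : Gb ≠ 0 := by rw [hGb]; positivity
  have hβb0 : βb ≠ 0 := by rw [hβb]; positivity
  have hD0 : D ≠ 0 := by
    rw [hD, hmxb, hmyb, hmzb, hGb]
    exact ne_of_lt (denom_neg gL gR mxL myL mzL mxR myR mzR hGL0 hGR0 hGL hGR)
  have hF5D : F5 * D = -(Gb * M) := by
    rw [hF5, hM, div_mul_cancel₀ _ hD0]; ring
  have hS : mxb * (mxR*βR - mxL*βL) + myb * (myR*βR - myL*βL) + mzb * (mzR*βR - mzL*βL)
      - Gb * (gR*βR - gL*βL) = (βR - βL) * D := by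
    rw [hD, hmxb, hmyb, hmzb, hGb]
    linear_combination ((βL+βR)/4) * hGL - ((βL+βR)/4) * hGR
  have hgroup : (mxR*βR - mxL*βL) * (mxb * F5 / Gb) + (myR*βR - myL*βL) * (myb * F5 / Gb)
      + (mzR*βR - mzL*βL) * (mzb * F5 / Gb) + (-(gR*βR) - -(gL*βL)) * F5
      = -(βR - βL) * M := by
    field_simp
    linear_combination F5 * hS + (βR - βL) * hF5D
  have hrest : ((γ - sR)/(γ-1) + βR - ((γ - sL)/(γ-1) + βL)) * (ρln * mxb)
      + (mxR*βR - mxL*βL) * (ρb / βb) + (-(βR - βL)) * M = ρR * mxR - ρL * mxL := by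
    have hsR : sR = sL + (1-γ)*lρ - lβ := by linarith
    rw [hM, hkcoef, hρln, hβln, hρb, hβb, hmxb, hsR]
    have hβs : βL + βR ≠ 0 := by positivity
    field_simp
    ring
  linear_combination hgroup + hrest

set_option maxHeartbeats 2000000 in
/-- Tadmor's condition for the entropy conservative numerical flux:
`[[V]] · F̃^x(W_L, W_R) = [[ψ^x]]` with entropy potential `ψ^x = ρΓu_x`. -/
theorem tadmor_condition
    (γ ρL uxL uyL uzL pL ρR uxR uyR uzR pR : ℝ)
    (hγ : 1 < γ)
    (hρL : 0 < ρL) (hpL : 0 < pL) (huL : uxL ^ 2 + uyL ^ 2 + uzL ^ 2 < 1)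
    (hρR : 0 < ρR) (hpR : 0 < pR) (huR : uxR ^ 2 + uyR ^ 2 + uzR ^ 2 < 1)
    (hρne : ρL ≠ ρR) (hβne : ρL / pL ≠ ρR / pR) :
    let ΓL := 1 / Real.sqrt (1 - (uxL ^ 2 + uyL ^ 2 + uzL ^ 2))
    let ΓR := 1 / Real.sqrt (1 - (uxR ^ 2 + uyR ^ 2 + uzR ^ 2))
    let βL := ρL / pL; let βR := ρR / pR
    let sL := Real.log (pL * ρL ^ (-γ)); let sR := Real.log (pR * ρR ^ (-γ))
    let VL : Fin 5 → ℝ :=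
      ![(γ - sL) / (γ - 1) + βL, uxL * ΓL * βL, uyL * ΓL * βL, uzL * ΓL * βL, -(ΓL * βL)]
    let VR : Fin 5 → ℝ :=
      ![(γ - sR) / (γ - 1) + βR, uxR * ΓR * βR, uyR * ΓR * βR, uzR * ΓR * βR, -(ΓR * βR)]
    let ρln := (ρR - ρL) / (Real.log ρR - Real.log ρL)
    let βln := (βR - βL) / (Real.log βR - Real.log βL)
    let kcoef := 1 / ((γ - 1) * βln) + 1
    let Γb := (ΓL + ΓR) / 2; let βb := (βL + βR) / 2; let ρb := (ρL + ρR) / 2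
    let mxb := (ΓL * uxL + ΓR * uxR) / 2
    let myb := (ΓL * uyL + ΓR * uyR) / 2
    let mzb := (ΓL * uzL + ΓR * uzR) / 2
    let F5 := -Γb * (kcoef * ρln * mxb + mxb * ρb / βb)
      / (mxb ^ 2 + myb ^ 2 + mzb ^ 2 - Γb ^ 2)
    let F : Fin 5 → ℝ :=
      ![ρln * mxb, mxb * F5 / Γb + ρb / βb, myb * F5 / Γb, mzb * F5 / Γb, F5]
    dot5 (fun i => VR i - VL i) F = ρR * ΓR * uxR - ρL * ΓL * uxL := by
  simp only [dot5, Matrix.cons_val_zero, Matrix.cons_val_one, Matrix.head_cons,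
    Matrix.cons_val_two, Matrix.tail_cons, Matrix.cons_val_three, Matrix.cons_val_four]
  have h1L : (0:ℝ) < 1 - (uxL ^ 2 + uyL ^ 2 + uzL ^ 2) := by linarith
  have h1R : (0:ℝ) < 1 - (uxR ^ 2 + uyR ^ 2 + uzR ^ 2) := by linarith
  have hsqL : (0:ℝ) < Real.sqrt (1 - (uxL ^ 2 + uyL ^ 2 + uzL ^ 2)) := Real.sqrt_pos.mpr h1L
  have hsqR : (0:ℝ) < Real.sqrt (1 - (uxR ^ 2 + uyR ^ 2 + uzR ^ 2)) := Real.sqrt_pos.mpr h1R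
  have hGL0 : (0:ℝ) < 1 / Real.sqrt (1 - (uxL ^ 2 + uyL ^ 2 + uzL ^ 2)) := by positivity
  have hGR0 : (0:ℝ) < 1 / Real.sqrt (1 - (uxR ^ 2 + uyR ^ 2 + uzR ^ 2)) := by positivity
  have hGL : (1 / Real.sqrt (1 - (uxL ^ 2 + uyL ^ 2 + uzL ^ 2)))^2 =
      (1 / Real.sqrt (1 - (uxL ^ 2 + uyL ^ 2 + uzL ^ 2)) * uxL)^2
      + (1 / Real.sqrt (1 - (uxL ^ 2 + uyL ^ 2 + uzL ^ 2)) * uyL)^2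
      + (1 / Real.sqrt (1 - (uxL ^ 2 + uyL ^ 2 + uzL ^ 2)) * uzL)^2 + 1 := by
    have hsq : Real.sqrt (1 - (uxL ^ 2 + uyL ^ 2 + uzL ^ 2)) ^ 2
        = 1 - (uxL ^ 2 + uyL ^ 2 + uzL ^ 2) := Real.sq_sqrt h1L.le
    field_simp
    linarith
  have hGR : (1 / Real.sqrt (1 - (uxR ^ 2 + uyR ^ 2 + uzR ^ 2)))^2 =
      (1 / Real.sqrt (1 - (uxR ^ 2 + uyR ^ 2 + uzR ^ 2)) * uxR)^2
      + (1 / Real.sqrt (1 - (uxR ^ 2 + uyR ^ 2 + uzR ^ 2)) * uyR)^2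
      + (1 / Real.sqrt (1 - (uxR ^ 2 + uyR ^ 2 + uzR ^ 2)) * uzR)^2 + 1 := by
    have hsq : Real.sqrt (1 - (uxR ^ 2 + uyR ^ 2 + uzR ^ 2)) ^ 2
        = 1 - (uxR ^ 2 + uyR ^ 2 + uzR ^ 2) := Real.sq_sqrt h1R.le
    field_simp
    linarith
  have hγ' : γ - 1 ≠ 0 := sub_ne_zero.mpr (ne_of_gt hγ)
  have hβLpos : (0:ℝ) < ρL / pL := div_pos hρL hpL
  have hβRpos : (0:ℝ) < ρR / pR := div_pos hρR hpR
  have hlρ : Real.log ρR - Real.log ρL ≠ 0 := by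
    intro h
    apply hρne
    have h' : Real.log ρL = Real.log ρR := by linarith
    calc ρL = Real.exp (Real.log ρL) := (Real.exp_log hρL).symm
      _ = Real.exp (Real.log ρR) := by rw [h']
      _ = ρR := Real.exp_log hρR
  have hlβ : Real.log (ρR / pR) - Real.log (ρL / pL) ≠ 0 := by
    intro h
    apply hβne
    have h' : Real.log (ρL / pL) = Real.log (ρR / pR) := by linarith
    calc ρL / pL = Real.exp (Real.log (ρL / pL)) := (Real.exp_log hβLpos).symm
      _ = Real.exp (Real.log (ρR / pR)) := by rw [h']
      _ = ρR / pR := Real.exp_log hβRpos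
  have hβd : ρR / pR - ρL / pL ≠ 0 := sub_ne_zero.mpr (Ne.symm hβne)
  have hs : Real.log (pR * ρR ^ (-γ)) - Real.log (pL * ρL ^ (-γ))
      = (1-γ)*(Real.log ρR - Real.log ρL)
        - (Real.log (ρR/pR) - Real.log (ρL/pL)) := by
    rw [Real.log_mul hpR.ne' (Real.rpow_pos_of_pos hρR _).ne',
      Real.log_mul hpL.ne' (Real.rpow_pos_of_pos hρL _).ne',
      Real.log_rpow hρR, Real.log_rpow hρL,
      Real.log_div hρR.ne' hpR.ne', Real.log_div hρL.ne' hpL.ne']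
    ring
  linear_combination key_s12 γ ρL ρR (ρL / pL) (ρR / pR)
    (1 / Real.sqrt (1 - (uxL ^ 2 + uyL ^ 2 + uzL ^ 2)))
    (1 / Real.sqrt (1 - (uxR ^ 2 + uyR ^ 2 + uzR ^ 2)))
    (1 / Real.sqrt (1 - (uxL ^ 2 + uyL ^ 2 + uzL ^ 2)) * uxL)
    (1 / Real.sqrt (1 - (uxL ^ 2 + uyL ^ 2 + uzL ^ 2)) * uyL)
    (1 / Real.sqrt (1 - (uxL ^ 2 + uyL ^ 2 + uzL ^ 2)) * uzL)
    (1 / Real.sqrt (1 - (uxR ^ 2 + uyR ^ 2 + uzR ^ 2)) * uxR)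
    (1 / Real.sqrt (1 - (uxR ^ 2 + uyR ^ 2 + uzR ^ 2)) * uyR)
    (1 / Real.sqrt (1 - (uxR ^ 2 + uyR ^ 2 + uzR ^ 2)) * uzR)
    (Real.log ρR - Real.log ρL)
    (Real.log (ρR / pR) - Real.log (ρL / pL))
    (Real.log (pL * ρL ^ (-γ))) (Real.log (pR * ρR ^ (-γ)))
    _ _ _ _ _ _ _ _ _ _ _ _
    hγ' hlρ hlβ hβd hβLpos hβRpos hGL0 hGR0 hGL hGR hs
    rfl rfl rfl rfl rfl rfl rfl rfl rfl rfl rfl rfl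
end
end

section
/- Let γ > 1 and let W = (ρ, u_x, u_y, u_z, p) be a primitive state with ρ > 0, p > 0 and u_x² + u_y² + u_z² < 1. If in the formula for the entropy conservative numerical flux F̃^x both arguments are equal to W (so that all arithmetic means equal the point values and the logarithmic means ρ^ln, β^ln are replaced by ρ and β respectively), then F̃^x(W, W) = f^x(W) = (ρΓu_x, ρhΓ²u_x² + p, ρhΓ²u_y u_x, ρhΓ²u_z u_x, ρhΓ²u_x); that is, the entropy conservative numerical flux is consistent with the x-directional flux. -/
noncomputable section

/-- Consistency of the entropy conservative numerical flux: evaluated at two equal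
states `W`, it reduces to the x-directional flux `f^x(W)`. -/
theorem entropy_conservative_flux_consistent
    (γ ρ ux uy uz p : ℝ)
    (hγ : 1 < γ) (hρ : 0 < ρ) (hp : 0 < p)
    (hu : ux ^ 2 + uy ^ 2 + uz ^ 2 < 1) :
    let Γ := 1 / Real.sqrt (1 - (ux ^ 2 + uy ^ 2 + uz ^ 2))
    let h := 1 + γ / (γ - 1) * (p / ρ)
    let β := ρ / p
    let mx := Γ * ux; let my := Γ * uy; let mz := Γ * uz
    let kcoef := 1 / ((γ - 1) * β) + 1
    let F5 := -Γ * (kcoef * ρ * mx + mx * ρ / β) / (mx ^ 2 + my ^ 2 + mz ^ 2 - Γ ^ 2)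
    (![ρ * mx, mx * F5 / Γ + ρ / β, my * F5 / Γ, mz * F5 / Γ, F5] : Fin 5 → ℝ)
      = ![ρ * Γ * ux, ρ * h * Γ ^ 2 * ux ^ 2 + p, ρ * h * Γ ^ 2 * uy * ux,
          ρ * h * Γ ^ 2 * uz * ux, ρ * h * Γ ^ 2 * ux] := by
  intro Γ h β mx my mz kcoef F5
  have hs : (0:ℝ) < 1 - (ux ^ 2 + uy ^ 2 + uz ^ 2) := by linarith
  have hsq : Real.sqrt (1 - (ux ^ 2 + uy ^ 2 + uz ^ 2)) ^ 2
      = 1 - (ux ^ 2 + uy ^ 2 + uz ^ 2) := Real.sq_sqrt hs.le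
  have hsqpos : 0 < Real.sqrt (1 - (ux ^ 2 + uy ^ 2 + uz ^ 2)) := Real.sqrt_pos.mpr hs
  have hΓpos : 0 < Γ := by positivity
  have hΓsq : Γ ^ 2 * (1 - (ux ^ 2 + uy ^ 2 + uz ^ 2)) = 1 := by
    show (1 / Real.sqrt (1 - (ux ^ 2 + uy ^ 2 + uz ^ 2))) ^ 2 * _ = 1
    rw [div_pow, one_pow, hsq]
    field_simp
  have hden : mx ^ 2 + my ^ 2 + mz ^ 2 - Γ ^ 2 = -1 := by
    show (Γ * ux) ^ 2 + (Γ * uy) ^ 2 + (Γ * uz) ^ 2 - Γ ^ 2 = -1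
    nlinarith [hΓsq]
  have hβ : ρ / β = p := by
    show ρ / (ρ / p) = p
    field_simp
  have hγ1 : γ - 1 ≠ 0 := by linarith
  have hF5 : F5 = ρ * h * Γ ^ 2 * ux := by
    show -Γ * (kcoef * ρ * mx + mx * ρ / β) / (mx ^ 2 + my ^ 2 + mz ^ 2 - Γ ^ 2)
        = ρ * h * Γ ^ 2 * ux
    rw [hden]
    have : kcoef * ρ * mx + mx * ρ / β = ρ * h * (Γ * ux) := by
      show (1 / ((γ - 1) * (ρ / p)) + 1) * ρ * (Γ * ux) + (Γ * ux) * ρ / (ρ / p)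
          = ρ * (1 + γ / (γ - 1) * (p / ρ)) * (Γ * ux)
      field_simp
      ring
    rw [this]
    show -Γ * (ρ * h * (Γ * ux)) / (-1) = ρ * h * Γ ^ 2 * ux
    ring
  have hmx : mx = Γ * ux := rfl
  have hmy : my = Γ * uy := rfl
  have hmz : mz = Γ * uz := rfl
  funext i
  fin_cases i <;>
    simp only [Matrix.cons_val_zero, Matrix.cons_val_one, Matrix.head_cons,
      Matrix.cons_val_two, Matrix.tail_cons, Matrix.cons_val_three,
      Matrix.cons_val_four, hF5, hβ, hmx, hmy, hmz] <;>
    field_simp <;> ring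
end
end

section
/- Let u_x, u_y, u_z ∈ ℝ satisfy u_x² + u_y² + u_z² < 1 and u_y² + u_z² ≠ 0. Set a = √(1 − u_x²) and b = √(1 − u_x² − u_y² − u_z²). Define the symmetric 2×2 matrix M = (1/(u_y² + u_z²)) · [[u_z² a + u_y² b, u_y u_z (b − a)], [u_y u_z (b − a), u_y² a + u_z² b]]. Then M² = [[1 − u_x² − u_y², −u_y u_z], [−u_y u_z, 1 − u_x² − u_z²]], and M is positive definite; that is, M is the symmetric positive definite square root of the velocity block of the Barth scaling matrix Y^x in the entropy scaling of the right eigenvectors. -/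
noncomputable section

open Matrix

set_option maxHeartbeats 1000000 in
/-- The matrix `M` built from `a = √(1 − u_x²)` and `b = √(1 − u_x² − u_y² − u_z²)`
is the symmetric positive definite square root of the velocity block of the Barth
scaling matrix: `M² = [[1 − u_x² − u_y², −u_y u_z], [−u_y u_z, 1 − u_x² − u_z²]]`
and `M` is positive definite. -/
theorem barth_velocity_block_sqrt
    (ux uy uz : ℝ)
    (hu : ux ^ 2 + uy ^ 2 + uz ^ 2 < 1)
    (hyz : uy ^ 2 + uz ^ 2 ≠ 0) :
    let a := Real.sqrt (1 - ux ^ 2)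
    let b := Real.sqrt (1 - ux ^ 2 - uy ^ 2 - uz ^ 2)
    let M : Matrix (Fin 2) (Fin 2) ℝ :=
      (1 / (uy ^ 2 + uz ^ 2)) •
        !![uz ^ 2 * a + uy ^ 2 * b, uy * uz * (b - a);
           uy * uz * (b - a), uy ^ 2 * a + uz ^ 2 * b]
    M * M = !![1 - ux ^ 2 - uy ^ 2, -(uy * uz);
               -(uy * uz), 1 - ux ^ 2 - uz ^ 2] ∧ M.PosDef := by
  intro a b M
  have hs : (0:ℝ) < uy ^ 2 + uz ^ 2 :=
    lt_of_le_of_ne (by positivity) (Ne.symm hyz)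
  have hb2 : (0:ℝ) < 1 - ux ^ 2 - uy ^ 2 - uz ^ 2 := by linarith
  have ha2 : (0:ℝ) < 1 - ux ^ 2 := by nlinarith
  have hb : 0 < b := Real.sqrt_pos.mpr hb2
  have ha : 0 < a := Real.sqrt_pos.mpr ha2
  have hbsq : b ^ 2 = 1 - ux ^ 2 - uy ^ 2 - uz ^ 2 := Real.sq_sqrt hb2.le
  have hasq : a ^ 2 = 1 - ux ^ 2 := Real.sq_sqrt ha2.le
  have hs' : (uy ^ 2 + uz ^ 2) ≠ 0 := hs.ne'
  constructor
  · show M * M = _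
    simp only [M]
    ext i j
    fin_cases i <;> fin_cases j <;>
      simp [Matrix.mul_apply, Fin.sum_univ_two, Matrix.smul_apply] <;>
      field_simp
    · linear_combination (uz ^ 2 * (uy ^ 2 + uz ^ 2)) * hasq +
        (uy ^ 2 * (uy ^ 2 + uz ^ 2)) * hbsq
    · linear_combination (uy * uz * (uy ^ 2 + uz ^ 2)) * hbsq -
        (uy * uz * (uy ^ 2 + uz ^ 2)) * hasq
    · linear_combination (uy * uz * (uy ^ 2 + uz ^ 2)) * hbsq -
        (uy * uz * (uy ^ 2 + uz ^ 2)) * hasq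
    · linear_combination (uy ^ 2 * (uy ^ 2 + uz ^ 2)) * hasq +
        (uz ^ 2 * (uy ^ 2 + uz ^ 2)) * hbsq
  · rw [Matrix.posDef_iff_dotProduct_mulVec]
    constructor
    · show Mᴴ = M
      simp only [M]
      ext i j
      fin_cases i <;> fin_cases j <;>
        simp [Matrix.conjTranspose_apply, Matrix.smul_apply]
    · intro x hx
      set v1 : ℝ := uz * x 0 - uy * x 1 with hv1
      set v2 : ℝ := uy * x 0 + uz * x 1 with hv2
      have hx2 : 0 < x 0 ^ 2 + x 1 ^ 2 := by
        rcases (by by_contra h; push_neg at h; exact hx (funext fun i => by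
          fin_cases i <;> simp [h.1, h.2]) : x 0 ≠ 0 ∨ x 1 ≠ 0) with h | h <;> positivity
      have h12 : v1 ^ 2 + v2 ^ 2 = (uy ^ 2 + uz ^ 2) * (x 0 ^ 2 + x 1 ^ 2) := by
        simp only [hv1, hv2]; ring
      have h12' : 0 < v1 ^ 2 + v2 ^ 2 := h12 ▸ mul_pos hs hx2
      have hq : 0 < a * v1 ^ 2 + b * v2 ^ 2 := by
        nlinarith [mul_nonneg (sub_nonneg.mpr (min_le_left a b)) (sq_nonneg v1),
          mul_nonneg (sub_nonneg.mpr (min_le_right a b)) (sq_nonneg v2),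
          mul_pos (lt_min ha hb) h12']
      have key : star x ⬝ᵥ M *ᵥ x =
          (a * v1 ^ 2 + b * v2 ^ 2) / (uy ^ 2 + uz ^ 2) := by
        simp only [M, Matrix.mulVec, dotProduct, Matrix.of_apply, Fin.sum_univ_two,
          Matrix.smul_apply, Pi.star_apply, star_trivial, smul_eq_mul,
          Matrix.cons_val', Matrix.cons_val_zero, Matrix.cons_val_one,
          Matrix.head_cons, Matrix.empty_val', Matrix.cons_val_fin_one, hv1, hv2]
        field_simp
        ring
      rw [key]
      exact div_pos hq hs
end
end
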